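/- arXiv:2211.03538 — 11 statements merged into one kernel-verified Lean document; each statement's English description precedes it below -/
import Mathlib

section
/- Let G be a simple graph containing an induced odd cycle H of length at least 5, and let u be a vertex not on H with exactly one neighbor on H. Then G contains an induced fork (the 5-vertex tree obtained from a claw by subdividing one edge). -/
open SimpleGraph

/-- `v` enumerates the vertices of an induced cycle of length `n` in `G`:
`v` is injective and two listed vertices are adjacent iff they are consecutive. -/
def IsInducedCycle {V : Type*} (G : SimpleGraph V) (n : ℕ) (v : ZMod n → V) : Prop :=
  3 ≤ n ∧ Function.Injective v ∧
    ∀ i j : ZMod n, G.Adj (v i) (v j) ↔ (j = i + 1 ∨ i = j + 1)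

/-- An odd hole: an induced odd cycle of length at least 5. -/
def IsOddHole {V : Type*} (G : SimpleGraph V) (n : ℕ) (v : ZMod n → V) : Prop :=
  5 ≤ n ∧ Odd n ∧ IsInducedCycle G n v

/-- `G` contains an induced fork (chair): the tree on `{c,x,y,z,w}` with
edges `cx, cy, cz, zw`. -/
def HasInducedFork {V : Type*} (G : SimpleGraph V) : Prop :=
  ∃ c x y z w : V, ([c, x, y, z, w] : List V).Nodup ∧
    G.Adj c x ∧ G.Adj c y ∧ G.Adj c z ∧ G.Adj z w ∧
    ¬G.Adj x y ∧ ¬G.Adj x z ∧ ¬G.Adj y z ∧ ¬G.Adj c w ∧ ¬G.Adj x w ∧ ¬G.Adj y w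

/-- `G` contains an induced claw `K_{1,3}`. -/
def HasInducedClaw {V : Type*} (G : SimpleGraph V) : Prop :=
  ∃ c x y z : V, ([c, x, y, z] : List V).Nodup ∧
    G.Adj c x ∧ G.Adj c y ∧ G.Adj c z ∧ ¬G.Adj x y ∧ ¬G.Adj x z ∧ ¬G.Adj y z

/-- `G` contains an induced `W₅`: an induced 5-cycle plus a vertex adjacent to
all five cycle vertices. -/
def HasInducedW5 {V : Type*} (G : SimpleGraph V) : Prop :=
  ∃ (u : ZMod 5 → V) (h : V), Function.Injective u ∧ (∀ i, h ≠ u i) ∧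
    (∀ i j : ZMod 5, G.Adj (u i) (u j) ↔ (j = i + 1 ∨ i = j + 1)) ∧
    ∀ i, G.Adj h (u i)

/-- `S` is an independent set of `G`. -/
def IsIS {V : Type*} (G : SimpleGraph V) (S : Set V) : Prop :=
  ∀ ⦃a⦄, a ∈ S → ∀ ⦃b⦄, b ∈ S → ¬G.Adj a b

/-- `S` is a maximal independent set of `G`. -/
def MaxIS {V : Type*} (G : SimpleGraph V) (S : Set V) : Prop :=
  IsIS G S ∧ ∀ T, IsIS G T → S ⊆ T → T = S

/-- A vertex `u` outside an (induced) 5-cycle `v` has either exactly two consecutive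
neighbors on the cycle, or exactly three neighbors that are not three consecutive
vertices (the only such pattern on a 5-cycle being `{i, i+1, i+3}`). -/
def GoodAttach {V : Type*} (G : SimpleGraph V) (v : ZMod 5 → V) (u : V) : Prop :=
  (∃ i : ZMod 5, ∀ k, G.Adj u (v k) ↔ (k = i ∨ k = i + 1)) ∨
  (∃ i : ZMod 5, ∀ k, G.Adj u (v k) ↔ (k = i ∨ k = i + 1 ∨ k = i + 3))

/-- `U_i`: the vertices outside the 5-cycle adjacent to both `v_{i+2}` and `v_{i+3}`. -/
def Uset {V : Type*} (G : SimpleGraph V) (v : ZMod 5 → V) (i : ZMod 5) : Set V :=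
  {u | u ∉ Set.range v ∧ G.Adj u (v (i + 2)) ∧ G.Adj u (v (i + 3))}

/-- `U_i⁺ = U_i ∩ N(v_i)`. -/
def UsetP {V : Type*} (G : SimpleGraph V) (v : ZMod 5 → V) (i : ZMod 5) : Set V :=
  {u | u ∈ Uset G v i ∧ G.Adj u (v i)}

/-- `U_i⁻ = U_i \ N(v_i)`. -/
def UsetM {V : Type*} (G : SimpleGraph V) (v : ZMod 5 → V) (i : ZMod 5) : Set V :=
  {u | u ∈ Uset G v i ∧ ¬G.Adj u (v i)}

theorem stmt0 {V : Type*} (G : SimpleGraph V) (n : ℕ) (v : ZMod n → V)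
    (hH : IsOddHole G n v) (u : V) (hu : u ∉ Set.range v)
    (hone : ∃! i : ZMod n, G.Adj u (v i)) :
    HasInducedFork G := by
  obtain ⟨hn5, -, -, hinj, hadj⟩ := hH
  obtain ⟨i, hi, huniq⟩ := hone
  haveI : NeZero n := ⟨by omega⟩
  have hnz : ∀ k : ℕ, 0 < k → k < n → (k : ZMod n) ≠ 0 := by
    intro k hk1 hk2 h
    rw [ZMod.natCast_eq_zero_iff] at h
    exact absurd (Nat.le_of_dvd hk1 h) (by omega)
  have h1 : (1 : ZMod n) ≠ 0 := by simpa using hnz 1 (by omega) (by omega)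
  have h2 : (2 : ZMod n) ≠ 0 := by simpa using hnz 2 (by omega) (by omega)
  have h3 : (3 : ZMod n) ≠ 0 := by simpa using hnz 3 (by omega) (by omega)
  have h4 : (4 : ZMod n) ≠ 0 := by simpa using hnz 4 (by omega) (by omega)
  have hune : ∀ j : ZMod n, u ≠ v j := fun j h => hu ⟨j, h.symm⟩
  have hnadj : ∀ j : ZMod n, j ≠ i → ¬ G.Adj u (v j) := fun j hj h => hj (huniq j h)
  have hvn : ∀ a b : ZMod n, (a = b → False) → v a ≠ v b := fun a b hab h => hab (hinj h)
  have e1 : v i ≠ v (i - 1) := hvn _ _ (fun he => h1 (by linear_combination he))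
  have e2 : v i ≠ v (i + 1) := hvn _ _ (fun he => h1 (by linear_combination -he))
  have e3 : v i ≠ v (i + 2) := hvn _ _ (fun he => h2 (by linear_combination -he))
  have e4 : v (i - 1) ≠ v (i + 1) := hvn _ _ (fun he => h2 (by linear_combination -he))
  have e5 : v (i - 1) ≠ v (i + 2) := hvn _ _ (fun he => h3 (by linear_combination -he))
  have e6 : v (i + 1) ≠ v (i + 2) := hvn _ _ (fun he => h1 (by linear_combination -he))
  refine ⟨v i, u, v (i - 1), v (i + 1), v (i + 2), ?_, hi.symm, ?_, ?_, ?_, ?_, ?_, ?_, ?_, ?_, ?_⟩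
  · simp only [List.nodup_cons, List.mem_cons, List.mem_singleton, List.not_mem_nil,
      List.nodup_nil, and_true, not_or, not_false_iff]
    exact ⟨⟨(hune i).symm, e1, e2, e3⟩, ⟨hune (i-1), hune (i+1), hune (i+2)⟩,
      ⟨e4, e5⟩, e6⟩
  · exact (hadj i (i-1)).mpr (Or.inr (by ring))
  · exact (hadj i (i+1)).mpr (Or.inl rfl)
  · exact (hadj (i+1) (i+2)).mpr (Or.inl (by ring))
  · exact hnadj (i-1) (fun he => h1 (by linear_combination -he))
  · exact hnadj (i+1) (fun he => h1 (by linear_combination he))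
  · intro h
    rcases (hadj (i-1) (i+1)).mp h with he | he
    · exact h1 (by linear_combination he)
    · exact h3 (by linear_combination -he)
  · intro h
    rcases (hadj i (i+2)).mp h with he | he
    · exact h1 (by linear_combination he)
    · exact h3 (by linear_combination -he)
  · exact hnadj (i+2) (fun he => h2 (by linear_combination he))
  · intro h
    rcases (hadj (i-1) (i+2)).mp h with he | he
    · exact h2 (by linear_combination he)
    · exact h4 (by linear_combination -he)
end

section
/- Let G be a simple graph containing an induced odd cycle H of length at least 5, and let u be a vertex not on H with exactly two neighbors on H that are not consecutive on H. Then G contains an induced fork. -/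
open SimpleGraph

private lemma zmodK {n : ℕ} (hn5 : 5 ≤ n) : ∀ a : ℕ, 0 < a → a < 5 → ((a : ℕ) : ZMod n) ≠ 0 := by
  haveI : NeZero n := ⟨by omega⟩
  intro a ha ha5 h
  rw [ZMod.natCast_eq_zero_iff] at h
  exact absurd (Nat.le_of_dvd ha h) (by omega)

private lemma fork_near {V : Type*} (G : SimpleGraph V) (n : ℕ) (v : ZMod n → V)
    (hn5 : 5 ≤ n) (hinj : Function.Injective v)
    (hcyc : ∀ a b : ZMod n, G.Adj (v a) (v b) ↔ (b = a + 1 ∨ a = b + 1))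
    (u : V) (hu : u ∉ Set.range v) (i : ZMod n)
    (hadj : ∀ k : ZMod n, G.Adj u (v k) ↔ (k = i ∨ k = i + 2)) :
    HasInducedFork G := by
  have K := zmodK (n := n) hn5
  have K1 : ((1:ℕ) : ZMod n) ≠ 0 := K 1 (by norm_num) (by norm_num)
  have K2 : ((2:ℕ) : ZMod n) ≠ 0 := K 2 (by norm_num) (by norm_num)
  have K3 : ((3:ℕ) : ZMod n) ≠ 0 := K 3 (by norm_num) (by norm_num)
  have K4 : ((4:ℕ) : ZMod n) ≠ 0 := K 4 (by norm_num) (by norm_num)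
  have vne : ∀ a b : ZMod n, a ≠ b → v a ≠ v b := fun a b h hh => h (hinj hh)
  have uv : ∀ k : ZMod n, u ≠ v k := fun k h => hu ⟨k, h.symm⟩
  refine ⟨v (i+2), u, v (i+1), v (i+3), v (i+4), ?_, ?_, ?_, ?_, ?_, ?_, ?_, ?_, ?_, ?_, ?_⟩
  · simp only [List.nodup_cons, List.mem_cons, List.not_mem_nil, or_false,
      List.nodup_nil, and_true, not_or]
    refine ⟨⟨?_, ?_, ?_, ?_⟩, ⟨?_, ?_, ?_⟩, ⟨?_, ?_⟩, ?_, not_false⟩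
    · exact (uv _).symm
    · exact vne _ _ (fun h => K1 (by push_cast; linear_combination h))
    · exact vne _ _ (fun h => K1 (by push_cast; linear_combination -h))
    · exact vne _ _ (fun h => K2 (by push_cast; linear_combination -h))
    · exact uv _
    · exact uv _
    · exact uv _
    · exact vne _ _ (fun h => K2 (by push_cast; linear_combination -h))
    · exact vne _ _ (fun h => K3 (by push_cast; linear_combination -h))
    · exact vne _ _ (fun h => K1 (by push_cast; linear_combination -h))
  · exact ((hadj (i+2)).mpr (Or.inr rfl)).symm
  · exact (hcyc (i+2) (i+1)).mpr (Or.inr (by ring))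
  · exact (hcyc (i+2) (i+3)).mpr (Or.inl (by ring))
  · exact (hcyc (i+3) (i+4)).mpr (Or.inl (by ring))
  · intro h
    rcases (hadj (i+1)).mp h with h | h
    · exact K1 (by push_cast; linear_combination h)
    · exact K1 (by push_cast; linear_combination -h)
  · intro h
    rcases (hadj (i+3)).mp h with h | h
    · exact K3 (by push_cast; linear_combination h)
    · exact K1 (by push_cast; linear_combination h)
  · intro h
    rcases (hcyc (i+1) (i+3)).mp h with h | h
    · exact K1 (by push_cast; linear_combination h)
    · exact K3 (by push_cast; linear_combination -h)
  · intro h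
    rcases (hcyc (i+2) (i+4)).mp h with h | h
    · exact K1 (by push_cast; linear_combination h)
    · exact K3 (by push_cast; linear_combination -h)
  · intro h
    rcases (hadj (i+4)).mp h with h | h
    · exact K4 (by push_cast; linear_combination h)
    · exact K2 (by push_cast; linear_combination h)
  · intro h
    rcases (hcyc (i+1) (i+4)).mp h with h | h
    · exact K2 (by push_cast; linear_combination h)
    · exact K4 (by push_cast; linear_combination -h)

private lemma fork_gen {V : Type*} (G : SimpleGraph V) (n : ℕ) (v : ZMod n → V)
    (hn5 : 5 ≤ n) (hinj : Function.Injective v)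
    (hcyc : ∀ a b : ZMod n, G.Adj (v a) (v b) ↔ (b = a + 1 ∨ a = b + 1))
    (u : V) (hu : u ∉ Set.range v) (i j : ZMod n)
    (h1 : j ≠ i) (h2 : j ≠ i + 1) (h3 : i ≠ j + 1) (h4 : j ≠ i + 2) (h5 : i ≠ j + 2)
    (hadj : ∀ k : ZMod n, G.Adj u (v k) ↔ (k = i ∨ k = j)) :
    HasInducedFork G := by
  have K := zmodK (n := n) hn5
  have K1 : ((1:ℕ) : ZMod n) ≠ 0 := K 1 (by norm_num) (by norm_num)
  have K2 : ((2:ℕ) : ZMod n) ≠ 0 := K 2 (by norm_num) (by norm_num)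
  have K3 : ((3:ℕ) : ZMod n) ≠ 0 := K 3 (by norm_num) (by norm_num)
  have vne : ∀ a b : ZMod n, a ≠ b → v a ≠ v b := fun a b h hh => h (hinj hh)
  have uv : ∀ k : ZMod n, u ≠ v k := fun k h => hu ⟨k, h.symm⟩
  refine ⟨v i, v (i-1), v (i+1), u, v j, ?_, ?_, ?_, ?_, ?_, ?_, ?_, ?_, ?_, ?_, ?_⟩
  · simp only [List.nodup_cons, List.mem_cons, List.not_mem_nil, or_false,
      List.nodup_nil, and_true, not_or]
    refine ⟨⟨?_, ?_, ?_, ?_⟩, ⟨?_, ?_, ?_⟩, ⟨?_, ?_⟩, ?_, not_false⟩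
    · exact vne _ _ (fun h => K1 (by push_cast; linear_combination h))
    · exact vne _ _ (fun h => K1 (by push_cast; linear_combination -h))
    · exact (uv _).symm
    · exact vne _ _ (fun h => h1 h.symm)
    · exact vne _ _ (fun h => K2 (by push_cast; linear_combination -h))
    · exact (uv _).symm
    · exact vne _ _ (fun h => h3 (by linear_combination h))
    · exact (uv _).symm
    · exact vne _ _ (fun h => h2 h.symm)
    · exact uv _
  · exact (hcyc i (i-1)).mpr (Or.inr (by ring))
  · exact (hcyc i (i+1)).mpr (Or.inl rfl)
  · exact ((hadj i).mpr (Or.inl rfl)).symm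
  · exact (hadj j).mpr (Or.inr rfl)
  · intro h
    rcases (hcyc (i-1) (i+1)).mp h with h | h
    · exact K1 (by push_cast; linear_combination h)
    · exact K3 (by push_cast; linear_combination -h)
  · intro h
    rcases (hadj (i-1)).mp h.symm with h | h
    · exact K1 (by push_cast; linear_combination -h)
    · exact h3 (by linear_combination h)
  · intro h
    rcases (hadj (i+1)).mp h.symm with h | h
    · exact K1 (by push_cast; linear_combination h)
    · exact h2 h.symm
  · intro h
    rcases (hcyc i j).mp h with h | h
    · exact h2 h
    · exact h3 h
  · intro h
    rcases (hcyc (i-1) j).mp h with h | h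
    · exact h1 (by linear_combination h)
    · exact h5 (by linear_combination h)
  · intro h
    rcases (hcyc (i+1) j).mp h with h | h
    · exact h4 (by linear_combination h)
    · exact h1 (by linear_combination -h)

theorem stmt1 {V : Type*} (G : SimpleGraph V) (n : ℕ) (v : ZMod n → V)
    (hH : IsOddHole G n v) (u : V) (hu : u ∉ Set.range v)
    (i j : ZMod n) (hij : i ≠ j) (hnc : ¬(j = i + 1 ∨ i = j + 1))
    (hadj : ∀ k : ZMod n, G.Adj u (v k) ↔ (k = i ∨ k = j)) :
    HasInducedFork G := by
  obtain ⟨hn5, -, -, hinj, hcyc⟩ := hH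
  push_neg at hnc
  obtain ⟨hnc1, hnc2⟩ := hnc
  by_cases hA : j = i + 2
  · exact fork_near G n v hn5 hinj hcyc u hu i (fun k => by rw [hadj k, hA])
  by_cases hB : i = j + 2
  · refine fork_near G n v hn5 hinj hcyc u hu j (fun k => ?_)
    rw [hadj k, ← hB]
    exact or_comm
  exact fork_gen G n v hn5 hinj hcyc u hu i j hij.symm hnc1 hnc2 hA hB hadj
end

section
/- Let G be a K4-free and fork-free graph containing an odd hole H. Then for any two vertices a, b on H, at most one vertex outside H is adjacent to exactly the two vertices a and b among the vertices of H. -/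
open SimpleGraph

section Aux

private lemma sub_ne_imp {R : Type*} [Ring R] {a b c : R} (h : a - b = c) (hc : c ≠ 0) :
    a ≠ b := fun e => hc (by rw [← h, e, sub_self])

private lemma zmod_small_ne {n : ℕ} (h5 : 5 ≤ n) (a : ℕ) (ha : 0 < a) (hb : a < n) :
    ((a : ℕ) : ZMod n) ≠ 0 := by
  haveI : NeZero n := ⟨by omega⟩
  intro h
  have := congrArg ZMod.val h
  rw [ZMod.val_natCast_of_lt hb, ZMod.val_zero] at this
  omega

/-- Fork construction: if `x` attaches to the induced cycle exactly at `i` and `j`,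
with `j ∉ {i+1, i-1, i+2}`, then `G` has an induced fork. -/
private lemma forkA {V : Type*} (G : SimpleGraph V) {n : ℕ} (h5 : 5 ≤ n)
    {v : ZMod n → V} (hinj : Function.Injective v)
    (hcyc : ∀ a b : ZMod n, G.Adj (v a) (v b) ↔ (b = a + 1 ∨ a = b + 1))
    (i j : ZMod n) (x : V) (hx : x ∉ Set.range v)
    (hxadj : ∀ k : ZMod n, G.Adj x (v k) ↔ (k = i ∨ k = j))
    (hj1 : j ≠ i + 1) (hj2 : j ≠ i - 1) (hj3 : j ≠ i + 2) : HasInducedFork G := by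
  have h1 : (1 : ZMod n) ≠ 0 := by exact_mod_cast zmod_small_ne h5 1 (by omega) (by omega)
  have h2 : (2 : ZMod n) ≠ 0 := by exact_mod_cast zmod_small_ne h5 2 (by omega) (by omega)
  have h3 : (3 : ZMod n) ≠ 0 := by exact_mod_cast zmod_small_ne h5 3 (by omega) (by omega)
  have h4 : (4 : ZMod n) ≠ 0 := by exact_mod_cast zmod_small_ne h5 4 (by omega) (by omega)
  have hn1 : (-1 : ZMod n) ≠ 0 := fun h => h1 (by linear_combination -h)
  have hn2 : (-2 : ZMod n) ≠ 0 := fun h => h2 (by linear_combination -h)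
  have hn3 : (-3 : ZMod n) ≠ 0 := fun h => h3 (by linear_combination -h)
  have hn4 : (-4 : ZMod n) ≠ 0 := fun h => h4 (by linear_combination -h)
  have hxne : ∀ k : ZMod n, x ≠ v k := fun k h => hx ⟨k, h.symm⟩
  refine ⟨v i, x, v (i - 1), v (i + 1), v (i + 2), ?_, ?_, ?_, ?_, ?_, ?_, ?_, ?_, ?_, ?_, ?_⟩
  · -- Nodup
    simp only [List.nodup_cons, List.mem_cons, List.not_mem_nil, or_false,
      List.mem_singleton, not_or, List.nodup_nil, and_true, not_false_eq_true]
    refine ⟨⟨(hxne i).symm, fun h => ?_, fun h => ?_, fun h => ?_⟩,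
      ⟨hxne _, hxne _, hxne _⟩, ⟨fun h => ?_, fun h => ?_⟩, fun h => ?_⟩
    · exact sub_ne_imp (show i - (i - 1) = 1 by ring) h1 (hinj h)
    · exact sub_ne_imp (show i - (i + 1) = -1 by ring) hn1 (hinj h)
    · exact sub_ne_imp (show i - (i + 2) = -2 by ring) hn2 (hinj h)
    · exact sub_ne_imp (show (i - 1) - (i + 1) = -2 by ring) hn2 (hinj h)
    · exact sub_ne_imp (show (i - 1) - (i + 2) = -3 by ring) hn3 (hinj h)
    · exact sub_ne_imp (show (i + 1) - (i + 2) = -1 by ring) hn1 (hinj h)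
  · exact ((hxadj i).mpr (Or.inl rfl)).symm
  · exact (hcyc i (i - 1)).mpr (Or.inr (by ring))
  · exact (hcyc i (i + 1)).mpr (Or.inl rfl)
  · exact (hcyc (i + 1) (i + 2)).mpr (Or.inl (by ring))
  · intro h
    rcases (hxadj _).mp h with e | e
    · exact sub_ne_imp (show (i - 1) - i = -1 by ring) hn1 e
    · exact hj2 e.symm
  · intro h
    rcases (hxadj _).mp h with e | e
    · exact sub_ne_imp (show (i + 1) - i = 1 by ring) h1 e
    · exact hj1 e.symm
  · intro h
    rcases (hcyc _ _).mp h with e | e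
    · exact sub_ne_imp (show (i + 1) - (i - 1 + 1) = 1 by ring) h1 e
    · exact sub_ne_imp (show (i - 1) - (i + 1 + 1) = -3 by ring) hn3 e
  · intro h
    rcases (hcyc _ _).mp h with e | e
    · exact sub_ne_imp (show (i + 2) - (i + 1) = 1 by ring) h1 e
    · exact sub_ne_imp (show i - (i + 2 + 1) = -3 by ring) hn3 e
  · intro h
    rcases (hxadj _).mp h with e | e
    · exact sub_ne_imp (show (i + 2) - i = 2 by ring) h2 e
    · exact hj3 e.symm
  · intro h
    rcases (hcyc _ _).mp h with e | e
    · exact sub_ne_imp (show (i + 2) - (i - 1 + 1) = 2 by ring) h2 e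
    · exact sub_ne_imp (show (i - 1) - (i + 2 + 1) = -4 by ring) hn4 e

/-- If `x` attaches to the induced cycle exactly at `i` and `j` and `G` is fork-free,
then `i` and `j` are consecutive. -/
private lemma consec {V : Type*} (G : SimpleGraph V) (hfork : ¬HasInducedFork G)
    {n : ℕ} (h5 : 5 ≤ n) {v : ZMod n → V} (hinj : Function.Injective v)
    (hcyc : ∀ a b : ZMod n, G.Adj (v a) (v b) ↔ (b = a + 1 ∨ a = b + 1))
    (i j : ZMod n) (x : V) (hx : x ∉ Set.range v)
    (hxadj : ∀ k : ZMod n, G.Adj x (v k) ↔ (k = i ∨ k = j)) :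
    j = i + 1 ∨ i = j + 1 := by
  have h4 : (4 : ZMod n) ≠ 0 := by exact_mod_cast zmod_small_ne h5 4 (by omega) (by omega)
  by_contra hc
  push_neg at hc
  obtain ⟨hj1, hj2⟩ := hc
  have hj2' : j ≠ i - 1 := fun h => hj2 (by rw [h]; ring)
  apply hfork
  by_cases hj3 : j = i + 2
  · -- use the reversed cycle
    set w : ZMod n → V := fun k => v (-k) with hw
    have hinjw : Function.Injective w := fun a b h => by
      have := hinj h; exact neg_injective this
    have hcycw : ∀ a b : ZMod n, G.Adj (w a) (w b) ↔ (b = a + 1 ∨ a = b + 1) := by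
      intro a b
      rw [hw]
      simp only
      rw [hcyc]
      constructor
      · rintro (h | h)
        · exact Or.inr (by linear_combination h)
        · exact Or.inl (by linear_combination h)
      · rintro (h | h)
        · exact Or.inr (by linear_combination h)
        · exact Or.inl (by linear_combination h)
    have hxw : x ∉ Set.range w := fun ⟨k, hk⟩ => hx ⟨-k, hk⟩
    have hxadjw : ∀ k : ZMod n, G.Adj x (w k) ↔ (k = -i ∨ k = -j) := by
      intro k
      rw [hw]
      simp only
      rw [hxadj]
      constructor
      · rintro (h | h)
        · exact Or.inl (by linear_combination -h)
        · exact Or.inr (by linear_combination -h)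
      · rintro (h | h)
        · exact Or.inl (by linear_combination -h)
        · exact Or.inr (by linear_combination -h)
    refine forkA G h5 hinjw hcycw (-i) (-j) x hxw hxadjw ?_ ?_ ?_
    · exact fun h => hj2' (by linear_combination -h)
    · exact fun h => hj1 (by linear_combination -h)
    · intro h
      rw [hj3] at h
      exact h4 (by linear_combination -h)
  · exact forkA G h5 hinj hcyc i j x hx hxadj hj1 hj2' hj3

/-- Core case: the two attachment points are consecutive (`i` and `i+1`). -/
private lemma core {V : Type*} (G : SimpleGraph V)
    (hK4 : G.CliqueFree 4) (hfork : ¬HasInducedFork G)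
    {n : ℕ} (h5 : 5 ≤ n) {v : ZMod n → V} (hinj : Function.Injective v)
    (hcyc : ∀ a b : ZMod n, G.Adj (v a) (v b) ↔ (b = a + 1 ∨ a = b + 1))
    (i : ZMod n) (x y : V) (hx : x ∉ Set.range v) (hy : y ∉ Set.range v)
    (hxadj : ∀ k : ZMod n, G.Adj x (v k) ↔ (k = i ∨ k = i + 1))
    (hyadj : ∀ k : ZMod n, G.Adj y (v k) ↔ (k = i ∨ k = i + 1)) : x = y := by
  classical
  have h1 : (1 : ZMod n) ≠ 0 := by exact_mod_cast zmod_small_ne h5 1 (by omega) (by omega)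
  have h2 : (2 : ZMod n) ≠ 0 := by exact_mod_cast zmod_small_ne h5 2 (by omega) (by omega)
  have h3 : (3 : ZMod n) ≠ 0 := by exact_mod_cast zmod_small_ne h5 3 (by omega) (by omega)
  have hn1 : (-1 : ZMod n) ≠ 0 := fun h => h1 (by linear_combination -h)
  have hn2 : (-2 : ZMod n) ≠ 0 := fun h => h2 (by linear_combination -h)
  have hn3 : (-3 : ZMod n) ≠ 0 := fun h => h3 (by linear_combination -h)
  have hxne : ∀ k : ZMod n, x ≠ v k := fun k h => hx ⟨k, h.symm⟩
  have hyne : ∀ k : ZMod n, y ≠ v k := fun k h => hy ⟨k, h.symm⟩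
  by_contra hne
  by_cases hadj : G.Adj x y
  · -- K4: {x, y, v i, v (i+1)}
    have c3 : G.IsNClique 3 {y, v i, v (i + 1)} :=
      is3Clique_triple_iff.mpr ⟨(hyadj i).mpr (Or.inl rfl), (hyadj _).mpr (Or.inr rfl),
        (hcyc i (i + 1)).mpr (Or.inl rfl)⟩
    have c4 : G.IsNClique 4 (insert x {y, v i, v (i + 1)}) := by
      apply c3.insert
      intro b hb
      simp only [Finset.mem_insert, Finset.mem_singleton] at hb
      rcases hb with rfl | rfl | rfl
      · exact hadj
      · exact (hxadj i).mpr (Or.inl rfl)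
      · exact (hxadj _).mpr (Or.inr rfl)
    exact hK4 _ c4
  · -- fork: c = v i, leaves x, y, path v (i-1), v (i-2)
    apply hfork
    refine ⟨v i, x, y, v (i - 1), v (i - 2), ?_, ?_, ?_, ?_, ?_, hadj, ?_, ?_, ?_, ?_, ?_⟩
    · simp only [List.nodup_cons, List.mem_cons, List.not_mem_nil, or_false,
        List.mem_singleton, not_or, List.nodup_nil, and_true]
      refine ⟨⟨(hxne i).symm, (hyne i).symm, fun h => ?_, fun h => ?_⟩,
        ⟨hne, hxne _, hxne _⟩, ⟨hyne _, hyne _⟩, ⟨fun h => ?_, not_false⟩⟩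
      · exact sub_ne_imp (show i - (i - 1) = 1 by ring) h1 (hinj h)
      · exact sub_ne_imp (show i - (i - 2) = 2 by ring) h2 (hinj h)
      · exact sub_ne_imp (show (i - 1) - (i - 2) = 1 by ring) h1 (hinj h)
    · exact ((hxadj i).mpr (Or.inl rfl)).symm
    · exact ((hyadj i).mpr (Or.inl rfl)).symm
    · exact (hcyc i (i - 1)).mpr (Or.inr (by ring))
    · exact (hcyc (i - 1) (i - 2)).mpr (Or.inr (by ring))
    · intro h
      rcases (hxadj _).mp h with e | e
      · exact sub_ne_imp (show (i - 1) - i = -1 by ring) hn1 e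
      · exact sub_ne_imp (show (i - 1) - (i + 1) = -2 by ring) hn2 e
    · intro h
      rcases (hyadj _).mp h with e | e
      · exact sub_ne_imp (show (i - 1) - i = -1 by ring) hn1 e
      · exact sub_ne_imp (show (i - 1) - (i + 1) = -2 by ring) hn2 e
    · intro h
      rcases (hcyc _ _).mp h with e | e
      · exact sub_ne_imp (show (i - 2) - (i + 1) = -3 by ring) hn3 e
      · exact sub_ne_imp (show i - (i - 2 + 1) = 1 by ring) h1 e
    · intro h
      rcases (hxadj _).mp h with e | e
      · exact sub_ne_imp (show (i - 2) - i = -2 by ring) hn2 e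
      · exact sub_ne_imp (show (i - 2) - (i + 1) = -3 by ring) hn3 e
    · intro h
      rcases (hyadj _).mp h with e | e
      · exact sub_ne_imp (show (i - 2) - i = -2 by ring) hn2 e
      · exact sub_ne_imp (show (i - 2) - (i + 1) = -3 by ring) hn3 e

end Aux

theorem stmt2 {V : Type*} (G : SimpleGraph V)
    (hK4 : G.CliqueFree 4) (hfork : ¬HasInducedFork G)
    (n : ℕ) (v : ZMod n → V) (hH : IsOddHole G n v)
    (i j : ZMod n) (hij : i ≠ j)
    (x y : V) (hx : x ∉ Set.range v) (hy : y ∉ Set.range v)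
    (hxadj : ∀ k : ZMod n, G.Adj x (v k) ↔ (k = i ∨ k = j))
    (hyadj : ∀ k : ZMod n, G.Adj y (v k) ↔ (k = i ∨ k = j)) :
    x = y := by
  obtain ⟨h5, -, -, hinj, hcyc⟩ := hH
  rcases consec G hfork h5 hinj hcyc i j x hx hxadj with hj | hj
  · subst hj
    exact core G hK4 hfork h5 hinj hcyc i x y hx hy hxadj hyadj
  · subst hj
    exact core G hK4 hfork h5 hinj hcyc j x y hx hy
      (fun k => (hxadj k).trans or_comm) (fun k => (hyadj k).trans or_comm)
end

section
/- Let G be a K4-free graph containing an induced 5-cycle H with vertices v1,...,v5 (indices mod 5), such that every vertex not on H has at least one neighbor on H, and every vertex not on H has either exactly two consecutive neighbors or exactly three pairwise nonconsecutive neighbors on H. For i = 1,...,5 let U_i be the set of vertices outside H adjacent to both v_{i+2} and v_{i+3}. Then each set {v_{i-1}, v_{i+1}} ∪ U_i is a maximal independent set of G, and every maximal independent set of G containing exactly two vertices of H equals {v_{i-1}, v_{i+1}} ∪ U_i for some i. -/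
open SimpleGraph

theorem stmt4 {V : Type*} (G : SimpleGraph V) (hK4 : G.CliqueFree 4)
    (v : ZMod 5 → V) (hH : IsInducedCycle G 5 v)
    (hdom : ∀ u : V, u ∉ Set.range v → ∃ i, G.Adj u (v i))
    (hstar : ∀ u : V, u ∉ Set.range v → GoodAttach G v u) :
    (∀ i : ZMod 5, MaxIS G ({v (i - 1), v (i + 1)} ∪ Uset G v i)) ∧
    (∀ S : Set V, MaxIS G S → (S ∩ Set.range v).ncard = 2 →
      ∃ i : ZMod 5, S = {v (i - 1), v (i + 1)} ∪ Uset G v i) := by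
  classical
  obtain ⟨-, hinj, hadj⟩ := hH
  -- key structural lemma on attachments
  have key : ∀ u : V, u ∉ Set.range v → ∀ i : ZMod 5,
      (G.Adj u (v (i+2)) ∧ G.Adj u (v (i+3))) ↔
        (¬G.Adj u (v (i-1)) ∧ ¬G.Adj u (v (i+1))) := by
    intro u hu i
    rcases hstar u hu with ⟨j, hj⟩ | ⟨j, hj⟩ <;> simp only [hj] <;> clear hj <;>
      revert i <;> revert j <;> decide
  -- U_i members are not adjacent to v (i-1), v (i+1)
  have unadj : ∀ (u : V) (i : ZMod 5), u ∈ Uset G v i →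
      ¬G.Adj u (v (i-1)) ∧ ¬G.Adj u (v (i+1)) := by
    intro u i hu
    exact (key u hu.1 i).mp ⟨hu.2.1, hu.2.2⟩
  -- two U_i members are never adjacent (else K4)
  have hUU : ∀ (a b : V) (i : ZMod 5), a ∈ Uset G v i → b ∈ Uset G v i → ¬G.Adj a b := by
    intro a b i ha hb hab
    have hane2 : a ≠ v (i+2) := fun h => ha.1 ⟨i+2, h.symm⟩
    have hane3 : a ≠ v (i+3) := fun h => ha.1 ⟨i+3, h.symm⟩
    have hbne2 : b ≠ v (i+2) := fun h => hb.1 ⟨i+2, h.symm⟩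
    have hbne3 : b ≠ v (i+3) := fun h => hb.1 ⟨i+3, h.symm⟩
    have h23 : G.Adj (v (i+2)) (v (i+3)) := (hadj _ _).mpr (Or.inl (by ring))
    have hne23 : v (i+2) ≠ v (i+3) := fun h => by
      have h2 := hinj h
      have : ∀ i : ZMod 5, i + 2 ≠ i + 3 := by decide
      exact this i h2
    apply hK4 {a, b, v (i+2), v (i+3)}
    constructor
    · intro x hx y hy hxy
      simp only [Finset.coe_insert, Set.mem_insert_iff, Finset.coe_singleton,
        Set.mem_singleton_iff] at hx hy
      rcases hx with rfl|rfl|rfl|rfl <;> rcases hy with rfl|rfl|rfl|rfl <;>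
        first
          | exact absurd rfl hxy
          | exact hab | exact hab.symm
          | exact ha.2.1 | exact ha.2.2 | exact hb.2.1 | exact hb.2.2
          | exact ha.2.1.symm | exact ha.2.2.symm | exact hb.2.1.symm | exact hb.2.2.symm
          | exact h23 | exact h23.symm
    · have hne : a ≠ b := hab.ne
      rw [Finset.card_insert_of_notMem (by simp [hne, hane2, hane3]),
        Finset.card_insert_of_notMem (by simp [hbne2, hbne3]),
        Finset.card_insert_of_notMem (by simp [hne23]), Finset.card_singleton]
  -- independence of each candidate set
  have hIS : ∀ i : ZMod 5, IsIS G ({v (i - 1), v (i + 1)} ∪ Uset G v i) := by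
    intro i a ha b hb hab
    have znadj : ∀ j k : ZMod 5, ¬(k = j + 1 ∨ j = k + 1) → ¬G.Adj (v j) (v k) :=
      fun j k h hadj' => h ((hadj j k).mp hadj')
    have z1 : ∀ i : ZMod 5, ¬(i + 1 = (i - 1) + 1 ∨ i - 1 = (i + 1) + 1) := by decide
    have z2 : ∀ i : ZMod 5, ¬(i - 1 = (i + 1) + 1 ∨ i + 1 = (i - 1) + 1) := by decide
    rcases ha with (rfl | rfl) | ha <;> rcases hb with (rfl | rfl) | hb
    · exact hab.ne rfl
    · exact znadj (i-1) (i+1) (z1 i) hab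
    · exact (unadj b i hb).1 hab.symm
    · exact znadj (i+1) (i-1) (z2 i) hab
    · exact hab.ne rfl
    · exact (unadj b i hb).2 hab.symm
    · exact (unadj a i ha).1 hab
    · exact (unadj a i ha).2 hab
    · exact hUU a b i ha hb hab
  -- every vertex outside the candidate set has a neighbor inside
  have hnbr : ∀ (i : ZMod 5) (w : V), w ∉ ({v (i - 1), v (i + 1)} ∪ Uset G v i) →
      ∃ s ∈ ({v (i - 1), v (i + 1)} ∪ Uset G v i : Set V), G.Adj w s := by
    intro i w hw
    by_cases hr : w ∈ Set.range v
    · obtain ⟨k, rfl⟩ := hr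
      have hk1 : k ≠ i - 1 := fun h => hw (Or.inl (Or.inl (by rw [h])))
      have hk2 : k ≠ i + 1 := fun h => hw (Or.inl (Or.inr (by rw [h]; exact Set.mem_singleton _)))
      have hcase : k = i ∨ k = i + 2 ∨ k = i + 3 := by
        clear hw; revert hk1 hk2; revert k; revert i; decide
      have z3 : ∀ i : ZMod 5, i + 2 = (i + 1) + 1 := by decide
      have z4 : ∀ i : ZMod 5, i - 1 = (i + 3) + 1 := by decide
      rcases hcase with rfl | rfl | rfl
      · exact ⟨v (k+1), Or.inl (Or.inr rfl), (hadj _ _).mpr (Or.inl rfl)⟩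
      · exact ⟨v (i+1), Or.inl (Or.inr rfl), (hadj (i+2) (i+1)).mpr (Or.inr (z3 i))⟩
      · exact ⟨v (i-1), Or.inl (Or.inl rfl), (hadj (i+3) (i-1)).mpr (Or.inl (z4 i))⟩
    · have hwu : w ∉ Uset G v i := fun h => hw (Or.inr h)
      have : ¬(G.Adj w (v (i+2)) ∧ G.Adj w (v (i+3))) := fun h => hwu ⟨hr, h.1, h.2⟩
      rw [key w hr i] at this
      push_neg at this
      by_cases h1 : G.Adj w (v (i-1))
      · exact ⟨v (i-1), Or.inl (Or.inl rfl), h1⟩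
      · exact ⟨v (i+1), Or.inl (Or.inr rfl), this h1⟩
  have hMax : ∀ i : ZMod 5, MaxIS G ({v (i - 1), v (i + 1)} ∪ Uset G v i) := by
    intro i
    refine ⟨hIS i, fun T hT hsub => Set.Subset.antisymm (fun w hw => ?_) hsub⟩
    by_contra hws
    obtain ⟨s, hs, hwadj⟩ := hnbr i w hws
    exact hT hw (hsub hs) hwadj
  refine ⟨hMax, ?_⟩
  intro S hS hcard
  obtain ⟨x, y, hxy, hset⟩ := Set.ncard_eq_two.mp hcard
  have hx : x ∈ S ∩ Set.range v := by rw [hset]; exact Or.inl rfl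
  have hy : y ∈ S ∩ Set.range v := by rw [hset]; exact Or.inr rfl
  obtain ⟨a, rfl⟩ := hx.2
  obtain ⟨b, rfl⟩ := hy.2
  have hab : a ≠ b := fun h => hxy (by rw [h])
  have hnadj : ¬(b = a + 1 ∨ a = b + 1) := fun h => hS.1 hx.1 hy.1 ((hadj a b).mpr h)
  -- produce i with {v (i-1), v (i+1)} = {v a, v b}
  have hiex : ∃ i : ZMod 5, (i - 1 = a ∧ i + 1 = b) ∨ (i - 1 = b ∧ i + 1 = a) := by
    clear hx hy hxy hset
    revert hab hnadj; revert b; revert a; decide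
  obtain ⟨i, hi⟩ := hiex
  refine ⟨i, hS.2 _ (hIS i) ?_ ▸ rfl⟩
  -- S ⊆ {v (i-1), v (i+1)} ∪ U_i
  intro s hs
  by_cases hr : s ∈ Set.range v
  · have : s ∈ S ∩ Set.range v := ⟨hs, hr⟩
    rw [hset] at this
    rcases hi with ⟨h1, h2⟩ | ⟨h1, h2⟩ <;> rcases this with rfl | rfl
    · exact Or.inl (Or.inl (by rw [h1]))
    · exact Or.inl (Or.inr (by rw [h2]; exact Set.mem_singleton _))
    · exact Or.inl (Or.inr (by rw [h2]; exact Set.mem_singleton _))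
    · exact Or.inl (Or.inl (by rw [h1]))
  · have hva : v a ∈ S := hx.1
    have hvb : v b ∈ S := hy.1
    have hn1 : ¬G.Adj s (v (i-1)) := by
      rcases hi with ⟨h1, _⟩ | ⟨h1, _⟩ <;> rw [h1]
      · exact hS.1 hs hva
      · exact hS.1 hs hvb
    have hn2 : ¬G.Adj s (v (i+1)) := by
      rcases hi with ⟨_, h2⟩ | ⟨_, h2⟩ <;> rw [h2]
      · exact hS.1 hs hvb
      · exact hS.1 hs hva
    have := (key s hr i).mpr ⟨hn1, hn2⟩
    exact Or.inr ⟨hr, this.1, this.2⟩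
end

section
/- Let G be a {K4, W5, fork}-free graph containing an induced 5-cycle H with vertices v1,...,v5 (indices mod 5), where every vertex outside H has either exactly two consecutive neighbors or exactly three pairwise nonconsecutive neighbors on H. For each i let U_i be the set of outside vertices adjacent to v_{i+2} and v_{i+3}, and U_i^+ = U_i ∩ N(v_i). If U_i^+ is nonempty, then every vertex of U_i is adjacent to every vertex of U_{i-2} ∪ U_{i+2}. -/
open SimpleGraph

lemma charU_aux {V : Type*} {G : SimpleGraph V} {v : ZMod 5 → V}
    (hH : IsInducedCycle G 5 v)
    (hstar : ∀ u : V, u ∉ Set.range v → GoodAttach G v u)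
    {i : ZMod 5} {u : V} (hu : u ∈ Uset G v i) :
    ∀ k : ZMod 5, G.Adj u (v k) → k = i ∨ k = i + 2 ∨ k = i + 3 := by
  obtain ⟨hr, h2, h3⟩ := hu
  intro k hk
  rcases hstar u hr with ⟨a, ha⟩ | ⟨a, ha⟩
  · have key : ∀ i a k : ZMod 5, (i+2 = a ∨ i+2 = a+1) → (i+3 = a ∨ i+3 = a+1) →
        (k = a ∨ k = a+1) → (k = i ∨ k = i+2 ∨ k = i+3) := by decide
    exact key i a k ((ha (i+2)).1 h2) ((ha (i+3)).1 h3) ((ha k).1 hk)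
  · have key : ∀ i a k : ZMod 5, (i+2 = a ∨ i+2 = a+1 ∨ i+2 = a+3) →
        (i+3 = a ∨ i+3 = a+1 ∨ i+3 = a+3) →
        (k = a ∨ k = a+1 ∨ k = a+3) → (k = i ∨ k = i+2 ∨ k = i+3) := by decide
    exact key i a k ((ha (i+2)).1 h2) ((ha (i+3)).1 h3) ((ha k).1 hk)

theorem stmt6 {V : Type*} (G : SimpleGraph V) (hK4 : G.CliqueFree 4)
    (hW5 : ¬HasInducedW5 G) (hfork : ¬HasInducedFork G)
    (v : ZMod 5 → V) (hH : IsInducedCycle G 5 v)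
    (hstar : ∀ u : V, u ∉ Set.range v → GoodAttach G v u)
    (i : ZMod 5) (hne : (UsetP G v i).Nonempty) :
    ∀ x ∈ Uset G v i, ∀ y ∈ Uset G v (i - 2) ∪ Uset G v (i + 2), G.Adj x y := by
  classical
  -- basic arithmetic normalizations
  have E1 : i + 2 + 2 = i + 4 := by rw [add_assoc]; congr 1
  have E2 : i + 2 + 3 = i + 0 := by rw [add_assoc]; congr 1
  have E3 : i + 3 + 2 = i + 0 := by rw [add_assoc]; congr 1
  have E4 : i + 3 + 3 = i + 1 := by rw [add_assoc]; congr 1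
  have E5 : i - 2 = i + 3 := by rw [sub_eq_add_neg]; congr 1
  have E0 : i = i + 0 := (add_zero i).symm
  have cancel : ∀ {a b : ZMod 5}, i + a = i + b → a = b := fun h => add_left_cancel h
  -- cycle adjacency in offset form
  have hCyc : ∀ a b : ZMod 5, G.Adj (v (i + a)) (v (i + b)) ↔ (b = a + 1 ∨ a = b + 1) := by
    intro a b
    rw [hH.2.2]
    constructor
    · rintro (h | h)
      · rw [add_assoc] at h; exact Or.inl (cancel h)
      · rw [add_assoc] at h; exact Or.inr (cancel h)
    · rintro (h | h)
      · exact Or.inl (by rw [h, add_assoc])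
      · exact Or.inr (by rw [h, add_assoc])
  have vne : ∀ a b : ZMod 5, a ≠ b → v (i + a) ≠ v (i + b) :=
    fun a b h h' => h (cancel (hH.2.1 h'))
  have neOut : ∀ {u : V}, u ∉ Set.range v → ∀ k : ZMod 5, u ≠ v k :=
    fun h k e => h ⟨k, e.symm⟩
  -- nonadjacency to cycle vertices from charU
  have nadjU : ∀ (j : ZMod 5) (u : V), u ∈ Uset G v (i + j) → ∀ d : ZMod 5,
      d ≠ j → d ≠ j + 2 → d ≠ j + 3 → ¬ G.Adj u (v (i + d)) := by
    intro j u hu d h0 h2 h3 h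
    rcases charU_aux hH hstar hu (i + d) h with h' | h' | h'
    · exact h0 (cancel h')
    · rw [add_assoc] at h'; exact h2 (cancel h')
    · rw [add_assoc] at h'; exact h3 (cancel h')
  -- K4 builder
  have K4 : ∀ a b c d : V, G.Adj a b → G.Adj a c → G.Adj a d → G.Adj b c →
      G.Adj b d → G.Adj c d → False := by
    intro a b c d hab hac had hbc hbd hcd
    refine hK4 {a, b, c, d} ⟨?_, ?_⟩
    · intro p hp q hq hpq
      simp only [Finset.coe_insert, Set.mem_insert_iff, Finset.coe_singleton,
        Set.mem_singleton_iff] at hp hq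
      rcases hp with rfl | rfl | rfl | rfl <;> rcases hq with rfl | rfl | rfl | rfl <;>
        first
          | exact absurd rfl hpq
          | assumption
          | exact hab.symm
          | exact hac.symm
          | exact had.symm
          | exact hbc.symm
          | exact hbd.symm
          | exact hcd.symm
    · rw [Finset.card_insert_of_notMem (by simp [hab.ne, hac.ne, had.ne]),
        Finset.card_insert_of_notMem (by simp [hbc.ne, hbd.ne]),
        Finset.card_insert_of_notMem (by simp [hcd.ne]), Finset.card_singleton]
  -- fork builder
  have mkFork : ∀ c x y z w : V,
      c ≠ x → c ≠ y → c ≠ z → c ≠ w → x ≠ y → x ≠ z → x ≠ w → y ≠ z → y ≠ w → z ≠ w →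
      G.Adj c x → G.Adj c y → G.Adj c z → G.Adj z w →
      ¬G.Adj x y → ¬G.Adj x z → ¬G.Adj y z → ¬G.Adj c w → ¬G.Adj x w → ¬G.Adj y w →
      False := by
    intro c x y z w h1 h2 h3 h4 h5 h6 h7 h8 h9 h10 a1 a2 a3 a4 n1 n2 n3 n4 n5 n6
    exact hfork ⟨c, x, y, z, w,
      by simp [h1, h2, h3, h4, h5, h6, h7, h8, h9, h10],
      a1, a2, a3, a4, n1, n2, n3, n4, n5, n6⟩
  -- Step 1: every vertex of U_i^+ is adjacent to every vertex of U_{i-2} ∪ U_{i+2}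
  have lemA : ∀ p ∈ UsetP G v i, ∀ y ∈ Uset G v (i - 2) ∪ Uset G v (i + 2), G.Adj p y := by
    rintro p ⟨hpU, hp0⟩ y hy
    have hpU' : p ∈ Uset G v (i + 0) := by rwa [← E0]
    obtain ⟨hpr, hp2, hp3⟩ := hpU
    rw [E0] at hp0
    by_contra hpy
    rcases hy with hy | hy
    · -- y ∈ U_{i+3} : adjacent to v(i+0), v(i+1), possibly v(i+3)
      rw [E5] at hy
      have hy' := hy
      obtain ⟨hyr, hy0, hy1⟩ := hy
      rw [E3] at hy0; rw [E4] at hy1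
      -- fork: center v(i+0); leaves y, v(i+4), p; pendant v(i+2) on p
      exact mkFork (v (i+0)) y (v (i+4)) p (v (i+2))
        (Ne.symm (neOut hyr _)) (vne 0 4 (by decide)) (Ne.symm (neOut hpr _))
        (vne 0 2 (by decide))
        (neOut hyr _)
        (fun e => nadjU 3 y hy' 2 (by decide) (by decide) (by decide) (by rw [e]; exact hp2))
        (neOut hyr _)
        (Ne.symm (neOut hpr _)) (vne 4 2 (by decide)) (neOut hpr _)
        hy0.symm ((hCyc 0 4).2 (by decide)) hp0.symm hp2
        (nadjU 3 y hy' 4 (by decide) (by decide) (by decide))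
        (fun a => hpy a.symm)
        (fun a => nadjU 0 p hpU' 4 (by decide) (by decide) (by decide) a.symm)
        (fun a => absurd ((hCyc 0 2).1 a) (by decide))
        (nadjU 3 y hy' 2 (by decide) (by decide) (by decide))
        (fun a => absurd ((hCyc 4 2).1 a) (by decide))
    · -- y ∈ U_{i+2} : adjacent to v(i+4), v(i+0), possibly v(i+2)
      have hy' := hy
      obtain ⟨hyr, hy4, hy0⟩ := hy
      rw [E1] at hy4; rw [E2] at hy0
      -- fork: center v(i+0); leaves y, v(i+1), p; pendant v(i+3) on p
      exact mkFork (v (i+0)) y (v (i+1)) p (v (i+3))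
        (Ne.symm (neOut hyr _)) (vne 0 1 (by decide)) (Ne.symm (neOut hpr _))
        (vne 0 3 (by decide))
        (neOut hyr _)
        (fun e => nadjU 2 y hy' 3 (by decide) (by decide) (by decide) (by rw [e]; exact hp3))
        (neOut hyr _)
        (Ne.symm (neOut hpr _)) (vne 1 3 (by decide)) (neOut hpr _)
        hy0.symm ((hCyc 0 1).2 (by decide)) hp0.symm hp3
        (nadjU 2 y hy' 1 (by decide) (by decide) (by decide))
        (fun a => hpy a.symm)
        (fun a => nadjU 0 p hpU' 1 (by decide) (by decide) (by decide) a.symm)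
        (fun a => absurd ((hCyc 0 3).1 a) (by decide))
        (nadjU 2 y hy' 3 (by decide) (by decide) (by decide))
        (fun a => absurd ((hCyc 1 3).1 a) (by decide))
  -- main proof
  intro x hx y hy
  by_cases hx0 : G.Adj x (v i)
  · exact lemA x ⟨hx, hx0⟩ y hy
  -- x ∈ U_i^-
  obtain ⟨p, hp⟩ := hne
  have hpy : G.Adj p y := lemA p hp y hy
  obtain ⟨hpU, hp0⟩ := hp
  have hpU' : p ∈ Uset G v (i + 0) := by rwa [← E0]
  obtain ⟨hpr, hp2, hp3⟩ := hpU
  rw [E0] at hp0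
  have hx' : x ∈ Uset G v (i + 0) := by rwa [← E0]
  obtain ⟨hxr, hx2, hx3⟩ := hx
  rw [E0] at hx0
  have hxp_ne : x ≠ p := fun e => hx0 (by rw [e]; exact hp0)
  have hxp : ¬ G.Adj x p := fun a =>
    K4 x p (v (i+2)) (v (i+3)) a hx2 hx3 hp2 hp3 ((hCyc 2 3).2 (by decide))
  by_contra hxy
  rcases hy with hy | hy
  · -- y ∈ U_{i+3} : adjacent to v(i+0), v(i+1), possibly v(i+3)
    rw [E5] at hy
    have hy' := hy
    obtain ⟨hyr, hy0, hy1⟩ := hy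
    rw [E3] at hy0; rw [E4] at hy1
    have hxy_ne : x ≠ y := fun e =>
      nadjU 3 y hy' 2 (by decide) (by decide) (by decide) (by rw [← e]; exact hx2)
    have hpy_ne : p ≠ y := fun e =>
      nadjU 3 y hy' 2 (by decide) (by decide) (by decide) (by rw [← e]; exact hp2)
    by_cases hc : G.Adj y (v (i + 3))
    · -- fork: center v(i+3); leaves x, v(i+4), y; pendant v(i+1) on y
      exact mkFork (v (i+3)) x (v (i+4)) y (v (i+1))
        (Ne.symm (neOut hxr _)) (vne 3 4 (by decide)) (Ne.symm (neOut hyr _))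
        (vne 3 1 (by decide))
        (neOut hxr _) hxy_ne (neOut hxr _)
        (Ne.symm (neOut hyr _)) (vne 4 1 (by decide)) (neOut hyr _)
        hx3.symm ((hCyc 3 4).2 (by decide)) hc.symm hy1
        (nadjU 0 x hx' 4 (by decide) (by decide) (by decide))
        hxy
        (fun a => nadjU 3 y hy' 4 (by decide) (by decide) (by decide) a.symm)
        (fun a => absurd ((hCyc 3 1).1 a) (by decide))
        (nadjU 0 x hx' 1 (by decide) (by decide) (by decide))
        (fun a => absurd ((hCyc 4 1).1 a) (by decide))
    · -- fork: center v(i+3); leaves v(i+4), x, p; pendant y on p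
      exact mkFork (v (i+3)) (v (i+4)) x p y
        (vne 3 4 (by decide)) (Ne.symm (neOut hxr _)) (Ne.symm (neOut hpr _))
        (Ne.symm (neOut hyr _))
        (Ne.symm (neOut hxr _)) (Ne.symm (neOut hpr _)) (Ne.symm (neOut hyr _))
        hxp_ne hxy_ne hpy_ne
        ((hCyc 3 4).2 (by decide)) hx3.symm hp3.symm hpy
        (fun a => nadjU 0 x hx' 4 (by decide) (by decide) (by decide) a.symm)
        (fun a => nadjU 0 p hpU' 4 (by decide) (by decide) (by decide) a.symm)
        hxp
        (fun a => hc a.symm)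
        (fun a => nadjU 3 y hy' 4 (by decide) (by decide) (by decide) a.symm)
        hxy
  · -- y ∈ U_{i+2} : adjacent to v(i+4), v(i+0), possibly v(i+2)
    have hy' := hy
    obtain ⟨hyr, hy4, hy0⟩ := hy
    rw [E1] at hy4; rw [E2] at hy0
    have hxy_ne : x ≠ y := fun e =>
      nadjU 2 y hy' 3 (by decide) (by decide) (by decide) (by rw [← e]; exact hx3)
    have hpy_ne : p ≠ y := fun e =>
      nadjU 2 y hy' 3 (by decide) (by decide) (by decide) (by rw [← e]; exact hp3)
    by_cases hc : G.Adj y (v (i + 2))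
    · -- fork: center v(i+2); leaves x, v(i+1), y; pendant v(i+4) on y
      exact mkFork (v (i+2)) x (v (i+1)) y (v (i+4))
        (Ne.symm (neOut hxr _)) (vne 2 1 (by decide)) (Ne.symm (neOut hyr _))
        (vne 2 4 (by decide))
        (neOut hxr _) hxy_ne (neOut hxr _)
        (Ne.symm (neOut hyr _)) (vne 1 4 (by decide)) (neOut hyr _)
        hx2.symm ((hCyc 2 1).2 (by decide)) hc.symm hy4
        (nadjU 0 x hx' 1 (by decide) (by decide) (by decide))
        hxy
        (fun a => nadjU 2 y hy' 1 (by decide) (by decide) (by decide) a.symm)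
        (fun a => absurd ((hCyc 2 4).1 a) (by decide))
        (nadjU 0 x hx' 4 (by decide) (by decide) (by decide))
        (fun a => absurd ((hCyc 1 4).1 a) (by decide))
    · -- fork: center v(i+2); leaves v(i+1), x, p; pendant y on p
      exact mkFork (v (i+2)) (v (i+1)) x p y
        (vne 2 1 (by decide)) (Ne.symm (neOut hxr _)) (Ne.symm (neOut hpr _))
        (Ne.symm (neOut hyr _))
        (Ne.symm (neOut hxr _)) (Ne.symm (neOut hpr _)) (Ne.symm (neOut hyr _))
        hxp_ne hxy_ne hpy_ne
        ((hCyc 2 1).2 (by decide)) hx2.symm hp2.symm hpy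
        (fun a => nadjU 0 x hx' 1 (by decide) (by decide) (by decide) a.symm)
        (fun a => nadjU 0 p hpU' 1 (by decide) (by decide) (by decide) a.symm)
        hxp
        (fun a => hc a.symm)
        (fun a => nadjU 2 y hy' 1 (by decide) (by decide) (by decide) a.symm)
        hxy
end

section
/- Let G be a {K4, W5, fork}-free graph containing an induced 5-cycle H with vertices v1,...,v5 (indices mod 5), where every vertex outside H has either exactly two consecutive neighbors or exactly three pairwise nonconsecutive neighbors on H. Let U_i be the outside vertices adjacent to v_{i+2} and v_{i+3}, and U_i^+ = U_i ∩ N(v_i). If U_i^+ is nonempty, then at least one of U_{i+2} and U_{i-2} is empty. -/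
open SimpleGraph

/-! Rotating the cycle we may take `i = 0`, and suppose `u ∈ U₀⁺`, `a ∈ U₂`, `b ∈ U₃`. So `u` sees
exactly `v₀, v₂, v₃`; `a` sees `v₄, v₀`, possibly `v₂`, and nothing else on the cycle; `b` sees
`v₀, v₁`, possibly `v₃`. Forks centred at `v₀` force the edges `ua` and `ub`, and then `ab` is a
non-edge because `{v₀, u, a, b}` is not a `K₄`. If `a` misses `v₂`, then `u; v₂, b, a–v₄` is a
fork, and symmetrically if `b` misses `v₃`; otherwise `v₀ a v₂ v₃ b` is an induced 5-cycle
dominated by `u`, a `W₅`. -/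

section InducedPatterns
variable {V : Type*} {G : SimpleGraph V}

lemma hasInducedFork_of_adj {c x y z w : V} (hxy : x ≠ y) (hcx : G.Adj c x) (hcy : G.Adj c y)
    (hcz : G.Adj c z) (hzw : G.Adj z w) (nxy : ¬G.Adj x y) (nxz : ¬G.Adj x z)
    (nyz : ¬G.Adj y z) (ncw : ¬G.Adj c w) (nxw : ¬G.Adj x w) (nyw : ¬G.Adj y w) :
    HasInducedFork G := by
  refine ⟨c, x, y, z, w, ?_, hcx, hcy, hcz, hzw, nxy, nxz, nyz, ncw, nxw, nyw⟩
  simp only [List.nodup_cons, List.mem_cons, List.not_mem_nil, List.nodup_nil, or_false,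
    not_or, and_true, not_false_eq_true]
  refine ⟨⟨hcx.ne, hcy.ne, hcz.ne, ?_⟩, ⟨hxy, ?_, ?_⟩, ⟨?_, ?_⟩, hzw.ne⟩ <;> rintro rfl
  · exact nxw hcx.symm
  · exact nxw hzw
  · exact nxz hzw.symm
  · exact nyw hzw
  · exact nyz hzw.symm

lemma ZMod.five_cases (x : ZMod 5) : x = 0 ∨ x = 1 ∨ x = 2 ∨ x = 3 ∨ x = 4 := by
  revert x; decide

lemma injective_of_adj_iff_five_cycle {u : ZMod 5 → V}
    (hu : ∀ i j : ZMod 5, G.Adj (u i) (u j) ↔ (j = i + 1 ∨ i = j + 1)) :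
    Function.Injective u := by
  intro i j hij
  by_contra hne
  -- two distinct vertices of a 5-cycle are told apart by the adjacency of some third vertex
  have separate : ∀ i j : ZMod 5, i ≠ j →
      ∃ k, ¬((i = k + 1 ∨ k = i + 1) ↔ (j = k + 1 ∨ k = j + 1)) := by
    decide
  obtain ⟨k, hk⟩ := separate i j hne
  exact hk (by rw [← hu, ← hu, hij])

lemma hasInducedW5_of_adj {w₀ w₁ w₂ w₃ w₄ h : V}
    (h01 : G.Adj w₀ w₁) (h12 : G.Adj w₁ w₂) (h23 : G.Adj w₂ w₃) (h34 : G.Adj w₃ w₄)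
    (h40 : G.Adj w₄ w₀) (h02 : ¬G.Adj w₀ w₂) (h13 : ¬G.Adj w₁ w₃) (h24 : ¬G.Adj w₂ w₄)
    (h30 : ¬G.Adj w₃ w₀) (h41 : ¬G.Adj w₄ w₁) (hh₀ : G.Adj h w₀) (hh₁ : G.Adj h w₁)
    (hh₂ : G.Adj h w₂) (hh₃ : G.Adj h w₃) (hh₄ : G.Adj h w₄) :
    HasInducedW5 G := by
  set u : ZMod 5 → V := ![w₀, w₁, w₂, w₃, w₄]
  have hu : ∀ i j : ZMod 5, G.Adj (u i) (u j) ↔ (j = i + 1 ∨ i = j + 1) := by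
    intro i j
    rcases ZMod.five_cases i with rfl | rfl | rfl | rfl | rfl <;>
      rcases ZMod.five_cases j with rfl | rfl | rfl | rfl | rfl <;>
      simp [u, h01, h12, h23, h34, h40, h01.symm, h12.symm, h23.symm, h34.symm, h40.symm,
        h02, h13, h24, h30, h41, mt Adj.symm h02, mt Adj.symm h13, mt Adj.symm h24,
        mt Adj.symm h30, mt Adj.symm h41] <;> decide
  have hhu : ∀ i, G.Adj h (u i) := by
    intro i
    rcases ZMod.five_cases i with rfl | rfl | rfl | rfl | rfl <;> assumption
  exact ⟨u, h, injective_of_adj_iff_five_cycle hu, fun i => (hhu i).ne, hu, hhu⟩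

end InducedPatterns

section InducedCycle
variable {V : Type*} {G : SimpleGraph V} {n : ℕ} {v : ZMod n → V}

lemma IsInducedCycle.adj (hH : IsInducedCycle G n v) {i j : ZMod n} (h : j = i + 1) :
    G.Adj (v i) (v j) :=
  (hH.2.2 i j).mpr (Or.inl h)

lemma IsInducedCycle.not_adj (hH : IsInducedCycle G n v) {i j : ZMod n} (hij : j ≠ i + 1)
    (hji : i ≠ j + 1) : ¬G.Adj (v i) (v j) := by
  rw [hH.2.2]
  exact not_or.mpr ⟨hij, hji⟩

lemma IsInducedCycle.rotate (hH : IsInducedCycle G n v) (i : ZMod n) :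
    IsInducedCycle G n (fun k => v (i + k)) :=
  ⟨hH.1, hH.2.1.comp (add_right_injective i), fun p q => by simp [hH.2.2, add_assoc]⟩

lemma range_rotate (v : ZMod n → V) (i : ZMod n) :
    Set.range (fun k => v (i + k)) = Set.range v :=
  (Equiv.addLeft i).surjective.range_comp v

end InducedCycle

section FiveCycle
variable {V : Type*} {G : SimpleGraph V} {v : ZMod 5 → V}

lemma GoodAttach.rotate {x : V} (hx : GoodAttach G v x) (i : ZMod 5) :
    GoodAttach G (fun k => v (i + k)) x := by
  rcases hx with ⟨j, hj⟩ | ⟨j, hj⟩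
  · exact Or.inl ⟨-i + j, fun k => by simp only [hj, add_assoc, eq_neg_add_iff_add_eq]⟩
  · exact Or.inr ⟨-i + j, fun k => by simp only [hj, add_assoc, eq_neg_add_iff_add_eq]⟩

lemma uset_rotate (i c : ZMod 5) : Uset G (fun k => v (i + k)) c = Uset G v (i + c) := by
  ext x
  simp only [Uset, Set.mem_ofPred_eq, range_rotate, add_assoc]

lemma usetP_rotate (i c : ZMod 5) : UsetP G (fun k => v (i + k)) c = UsetP G v (i + c) := by
  ext x
  simp only [UsetP, uset_rotate, Set.mem_ofPred_eq]

lemma GoodAttach.not_adj_of_mem_uset {x : V} {i : ZMod 5} (hx : GoodAttach G v x)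
    (hxU : x ∈ Uset G v i) : ¬G.Adj x (v (i + 1)) ∧ ¬G.Adj x (v (i + 4)) := by
  obtain ⟨-, h2, h3⟩ := hxU
  rcases hx with ⟨j, hj⟩ | ⟨j, hj⟩ <;> rw [hj] at h2 h3 <;> rw [hj, hj] <;> clear hj <;>
    revert h2 h3 <;> revert i j <;> decide

lemma adj_of_mem_usetP_zero_of_mem_uset_two (hfork : ¬HasInducedFork G)
    (hH : IsInducedCycle G 5 v) (hstar : ∀ u : V, u ∉ Set.range v → GoodAttach G v u)
    {u a : V} (hu : u ∈ UsetP G v 0) (ha : a ∈ Uset G v 2) : G.Adj u a := by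
  have nu1 : ¬G.Adj u (v 1) := ((hstar u hu.1.1).not_adj_of_mem_uset hu.1).1
  obtain ⟨na3, na1⟩ : ¬G.Adj a (v 3) ∧ ¬G.Adj a (v 1) :=
    (hstar a ha.1).not_adj_of_mem_uset ha
  by_contra hn
  exact hfork (hasInducedFork_of_adj (c := v 0) (x := v 1) (y := a) (z := u) (w := v 3)
    (fun h => ha.1 ⟨1, h⟩) (hH.adj (by decide)) ha.2.2.symm hu.2.symm hu.1.2.2
    (mt Adj.symm na1) (mt Adj.symm nu1) (mt Adj.symm hn) (hH.not_adj (by decide) (by decide))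
    (hH.not_adj (by decide) (by decide)) na3)

lemma adj_of_mem_usetP_zero_of_mem_uset_three (hfork : ¬HasInducedFork G)
    (hH : IsInducedCycle G 5 v) (hstar : ∀ u : V, u ∉ Set.range v → GoodAttach G v u)
    {u b : V} (hu : u ∈ UsetP G v 0) (hb : b ∈ Uset G v 3) : G.Adj u b := by
  have nu4 : ¬G.Adj u (v 4) := ((hstar u hu.1.1).not_adj_of_mem_uset hu.1).2
  obtain ⟨nb4, nb2⟩ : ¬G.Adj b (v 4) ∧ ¬G.Adj b (v 2) :=
    (hstar b hb.1).not_adj_of_mem_uset hb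
  by_contra hn
  exact hfork (hasInducedFork_of_adj (c := v 0) (x := v 4) (y := b) (z := u) (w := v 2)
    (fun h => hb.1 ⟨4, h⟩) (hH.adj (by decide)).symm hb.2.1.symm hu.2.symm hu.1.2.1
    (mt Adj.symm nb4) (mt Adj.symm nu4) (mt Adj.symm hn) (hH.not_adj (by decide) (by decide))
    (hH.not_adj (by decide) (by decide)) nb2)

theorem uset_two_eq_empty_or_uset_three_eq_empty_of_mem_usetP_zero (hK4 : G.CliqueFree 4)
    (hW5 : ¬HasInducedW5 G) (hfork : ¬HasInducedFork G) (hH : IsInducedCycle G 5 v)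
    (hstar : ∀ u : V, u ∉ Set.range v → GoodAttach G v u) {u : V} (hu : u ∈ UsetP G v 0) :
    Uset G v 2 = ∅ ∨ Uset G v 3 = ∅ := by
  by_contra! h
  obtain ⟨⟨a, ha⟩, ⟨b, hb⟩⟩ := h
  have hua := adj_of_mem_usetP_zero_of_mem_uset_two hfork hH hstar hu ha
  have hub := adj_of_mem_usetP_zero_of_mem_uset_three hfork hH hstar hu hb
  obtain ⟨nu1, nu4⟩ : ¬G.Adj u (v 1) ∧ ¬G.Adj u (v 4) :=
    (hstar u hu.1.1).not_adj_of_mem_uset hu.1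
  obtain ⟨na3, na1⟩ : ¬G.Adj a (v 3) ∧ ¬G.Adj a (v 1) :=
    (hstar a ha.1).not_adj_of_mem_uset ha
  obtain ⟨nb4, nb2⟩ : ¬G.Adj b (v 4) ∧ ¬G.Adj b (v 2) :=
    (hstar b hb.1).not_adj_of_mem_uset hb
  have ha0 : G.Adj a (v 0) := ha.2.2
  have hb0 : G.Adj b (v 0) := hb.2.1
  have hab : ¬G.Adj a b := by
    classical
    intro hab
    refine hK4 {v 0, u, a, b} ((is3Clique_triple_iff.mpr ⟨hua, hub, hab⟩).insert ?_)
    simp [hu.2.symm, ha0.symm, hb0.symm]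
  by_cases ha2 : G.Adj a (v 2)
  · by_cases hb3 : G.Adj b (v 3)
    · exact hW5 (hasInducedW5_of_adj (w₀ := v 0) (w₁ := a) (w₂ := v 2) (w₃ := v 3) (w₄ := b)
        (h := u) ha0.symm ha2 (hH.adj (by decide)) hb3.symm hb0
        (hH.not_adj (by decide) (by decide)) na3 (mt Adj.symm nb2)
        (hH.not_adj (by decide) (by decide)) (mt Adj.symm hab) hu.2 hua hu.1.2.1 hu.1.2.2 hub)
    · exact hfork (hasInducedFork_of_adj (c := u) (x := v 3) (y := a) (z := b) (w := v 1)
        (fun h => ha.1 ⟨3, h⟩) hu.1.2.2 hua hub hb.2.2 (mt Adj.symm na3) (mt Adj.symm hb3)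
        hab nu1 (hH.not_adj (by decide) (by decide)) na1)
  · exact hfork (hasInducedFork_of_adj (c := u) (x := v 2) (y := b) (z := a) (w := v 4)
      (fun h => hb.1 ⟨2, h⟩) hu.1.2.1 hub hua ha.2.1 (mt Adj.symm nb2) (mt Adj.symm ha2)
      (mt Adj.symm hab) nu4 (hH.not_adj (by decide) (by decide)) nb4)

end FiveCycle

theorem stmt7 {V : Type*} (G : SimpleGraph V) (hK4 : G.CliqueFree 4)
    (hW5 : ¬HasInducedW5 G) (hfork : ¬HasInducedFork G)
    (v : ZMod 5 → V) (hH : IsInducedCycle G 5 v)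
    (hstar : ∀ u : V, u ∉ Set.range v → GoodAttach G v u)
    (i : ZMod 5) (hne : (UsetP G v i).Nonempty) :
    Uset G v (i + 2) = ∅ ∨ Uset G v (i - 2) = ∅ := by
  obtain ⟨u, hu⟩ := hne
  rw [← add_zero i, ← usetP_rotate] at hu
  rw [show i - 2 = i + 3 by rw [sub_eq_add_neg]; rfl, ← uset_rotate, ← uset_rotate]
  exact uset_two_eq_empty_or_uset_three_eq_empty_of_mem_usetP_zero hK4 hW5 hfork (hH.rotate i)
    (fun x hx => (hstar x (range_rotate v i ▸ hx)).rotate i) hu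
end

section
/- Let G be a {K4, W5, fork}-free graph containing an induced 5-cycle H with vertices v1,...,v5 (indices mod 5), where every vertex outside H has either exactly two consecutive neighbors or exactly three pairwise nonconsecutive neighbors on H. Let U_i be the outside vertices adjacent to v_{i+2} and v_{i+3}, and U_i^+ = U_i ∩ N(v_i). If U_i^+ is nonempty, then every vertex of U_i^+ has at most one non-neighbor in U_{i-1}^+ and at most one non-neighbor in U_{i+1}^+. -/
open SimpleGraph

lemma nodup5 {V : Type*} {a b c d e : V} (h1 : a ≠ b) (h2 : a ≠ c) (h3 : a ≠ d) (h4 : a ≠ e)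
    (h5 : b ≠ c) (h6 : b ≠ d) (h7 : b ≠ e) (h8 : c ≠ d) (h9 : c ≠ e) (h10 : d ≠ e) :
    ([a, b, c, d, e] : List V).Nodup := by
  simp [h1, h2, h3, h4, h5, h6, h7, h8, h9, h10]

set_option synthInstance.maxSize 512 in
set_option synthInstance.maxHeartbeats 1000000 in
lemma nbrP {V : Type*} (G : SimpleGraph V) (v : ZMod 5 → V)
    (hH : IsInducedCycle G 5 v) (hstar : ∀ u : V, u ∉ Set.range v → GoodAttach G v u)
    (j : ZMod 5) (x : V) (hx : x ∈ UsetP G v j) :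
    ∀ k, G.Adj x (v k) ↔ (k = j ∨ k = j + 2 ∨ k = j + 3) := by
  obtain ⟨⟨hrange, h2, h3⟩, h0⟩ := hx
  rcases hstar x hrange with ⟨a, ha⟩ | ⟨a, ha⟩
  · exfalso
    have key : ∀ j a : ZMod 5, (j = a ∨ j = a + 1) → (j + 2 = a ∨ j + 2 = a + 1) → False := by
      decide
    exact key j a ((ha j).mp h0) ((ha (j + 2)).mp h2)
  · have key : ∀ j a k : ZMod 5, (j = a ∨ j = a + 1 ∨ j = a + 3) →
        (j + 2 = a ∨ j + 2 = a + 1 ∨ j + 2 = a + 3) →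
        (j + 3 = a ∨ j + 3 = a + 1 ∨ j + 3 = a + 3) →
        ((k = a ∨ k = a + 1 ∨ k = a + 3) ↔ (k = j ∨ k = j + 2 ∨ k = j + 3)) := by
      decide
    intro k
    rw [ha k]
    exact key j a k ((ha j).mp h0) ((ha (j + 2)).mp h2) ((ha (j + 3)).mp h3)

theorem stmt8 {V : Type*} (G : SimpleGraph V) (hK4 : G.CliqueFree 4)
    (hW5 : ¬HasInducedW5 G) (hfork : ¬HasInducedFork G)
    (v : ZMod 5 → V) (hH : IsInducedCycle G 5 v)
    (hstar : ∀ u : V, u ∉ Set.range v → GoodAttach G v u)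
    (i : ZMod 5) (hne : (UsetP G v i).Nonempty) :
    ∀ x ∈ UsetP G v i,
      {y ∈ UsetP G v (i - 1) | y ≠ x ∧ ¬G.Adj x y}.Subsingleton ∧
      {y ∈ UsetP G v (i + 1) | y ≠ x ∧ ¬G.Adj x y}.Subsingleton := by
  classical
  intro x hx
  have hnx := nbrP G v hH hstar i x hx
  have vinj := hH.2.1
  have vadj := hH.2.2
  obtain ⟨⟨hxr, hx2, hx3⟩, hx0⟩ := hx
  have xnev : ∀ k, x ≠ v k := fun k h => hxr ⟨k, h.symm⟩
  constructor
  · intro y hy y' hy'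
    by_contra hne'
    simp only [Set.mem_setOf_eq] at hy hy'
    obtain ⟨hyU, hyx, hxy⟩ := hy
    obtain ⟨hyU', hyx', hxy'⟩ := hy'
    have hny := nbrP G v hH hstar (i - 1) y hyU
    have hny' := nbrP G v hH hstar (i - 1) y' hyU'
    have ynev : ∀ k, y ≠ v k := fun k h => hyU.1.1 ⟨k, h.symm⟩
    have ynev' : ∀ k, y' ≠ v k := fun k h => hyU'.1.1 ⟨k, h.symm⟩
    have hy1 : G.Adj y (v (i + 1)) := (hny (i + 1)).mpr (Or.inr (Or.inl (by ring)))
    have hy2 : G.Adj y (v (i + 2)) := (hny (i + 2)).mpr (Or.inr (Or.inr (by ring)))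
    have hy1' : G.Adj y' (v (i + 1)) := (hny' (i + 1)).mpr (Or.inr (Or.inl (by ring)))
    have hy2' : G.Adj y' (v (i + 2)) := (hny' (i + 2)).mpr (Or.inr (Or.inr (by ring)))
    by_cases hadj : G.Adj y y'
    · apply hK4 {y, y', v (i + 1), v (i + 2)}
      constructor
      · intro a ha b hb hab
        simp only [Finset.coe_insert, Set.mem_insert_iff, Finset.coe_singleton,
          Set.mem_singleton_iff] at ha hb
        have h12 : G.Adj (v (i + 1)) (v (i + 2)) :=
          (vadj (i + 1) (i + 2)).mpr (Or.inl (by ring))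
        rcases ha with rfl | rfl | rfl | rfl <;> rcases hb with rfl | rfl | rfl | rfl <;>
          first
            | exact absurd rfl hab
            | assumption
            | exact hadj.symm
            | exact hy1.symm
            | exact hy2.symm
            | exact hy1'.symm
            | exact hy2'.symm
            | exact h12.symm
      · have d1 : v (i + 1) ≠ v (i + 2) := fun h => ((by decide : ∀ t : ZMod 5, ¬(t + 1 = t + 2)) i) (vinj h)
        rw [Finset.card_insert_of_notMem (by simp [hne', ynev]),
          Finset.card_insert_of_notMem (by simp [ynev']),
          Finset.card_insert_of_notMem (by simp [d1]), Finset.card_singleton]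
    · apply hfork
      refine ⟨v (i + 2), y, y', x, v i, ?_, hy2.symm, hy2'.symm,
        ((hnx (i + 2)).mpr (Or.inr (Or.inl rfl))).symm, hx0, hadj,
        fun h => hxy h.symm, fun h => hxy' h.symm, ?_, ?_, ?_⟩
      · have d2 : v (i + 2) ≠ v i := fun h => ((by decide : ∀ t : ZMod 5, ¬(t + 2 = t )) i) (vinj h)
        exact nodup5 (fun h => ynev (i+2) h.symm) (fun h => ynev' (i+2) h.symm)
          (fun h => xnev (i+2) h.symm) d2 hne' hyx (ynev i) hyx' (ynev' i) (xnev i)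
      · intro h
        have key : ∀ i : ZMod 5, ¬(i = i + 2 + 1 ∨ i + 2 = i + 1) := by decide
        exact key i ((vadj (i + 2) i).mp h)
      · intro h
        have key : ∀ i : ZMod 5, ¬(i = i - 1 ∨ i = i - 1 + 2 ∨ i = i - 1 + 3) := by decide
        exact key i ((hny i).mp h)
      · intro h
        have key : ∀ i : ZMod 5, ¬(i = i - 1 ∨ i = i - 1 + 2 ∨ i = i - 1 + 3) := by decide
        exact key i ((hny' i).mp h)
  · intro y hy y' hy'
    by_contra hne'
    simp only [Set.mem_setOf_eq] at hy hy'
    obtain ⟨hyU, hyx, hxy⟩ := hy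
    obtain ⟨hyU', hyx', hxy'⟩ := hy'
    have hny := nbrP G v hH hstar (i + 1) y hyU
    have hny' := nbrP G v hH hstar (i + 1) y' hyU'
    have ynev : ∀ k, y ≠ v k := fun k h => hyU.1.1 ⟨k, h.symm⟩
    have ynev' : ∀ k, y' ≠ v k := fun k h => hyU'.1.1 ⟨k, h.symm⟩
    have hy3 : G.Adj y (v (i + 3)) := (hny (i + 3)).mpr (Or.inr (Or.inl (by ring)))
    have hy4 : G.Adj y (v (i + 4)) := (hny (i + 4)).mpr (Or.inr (Or.inr (by ring)))
    have hy3' : G.Adj y' (v (i + 3)) := (hny' (i + 3)).mpr (Or.inr (Or.inl (by ring)))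
    have hy4' : G.Adj y' (v (i + 4)) := (hny' (i + 4)).mpr (Or.inr (Or.inr (by ring)))
    by_cases hadj : G.Adj y y'
    · apply hK4 {y, y', v (i + 3), v (i + 4)}
      constructor
      · intro a ha b hb hab
        simp only [Finset.coe_insert, Set.mem_insert_iff, Finset.coe_singleton,
          Set.mem_singleton_iff] at ha hb
        have h34 : G.Adj (v (i + 3)) (v (i + 4)) :=
          (vadj (i + 3) (i + 4)).mpr (Or.inl (by ring))
        rcases ha with rfl | rfl | rfl | rfl <;> rcases hb with rfl | rfl | rfl | rfl <;>
          first
            | exact absurd rfl hab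
            | assumption
            | exact hadj.symm
            | exact hy3.symm
            | exact hy4.symm
            | exact hy3'.symm
            | exact hy4'.symm
            | exact h34.symm
      · have d1 : v (i + 3) ≠ v (i + 4) := fun h => ((by decide : ∀ t : ZMod 5, ¬(t + 3 = t + 4)) i) (vinj h)
        rw [Finset.card_insert_of_notMem (by simp [hne', ynev]),
          Finset.card_insert_of_notMem (by simp [ynev']),
          Finset.card_insert_of_notMem (by simp [d1]), Finset.card_singleton]
    · apply hfork
      refine ⟨v (i + 3), y, y', x, v i, ?_, hy3.symm, hy3'.symm,
        ((hnx (i + 3)).mpr (Or.inr (Or.inr rfl))).symm, hx0, hadj,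
        fun h => hxy h.symm, fun h => hxy' h.symm, ?_, ?_, ?_⟩
      · have d2 : v (i + 3) ≠ v i := fun h => ((by decide : ∀ t : ZMod 5, ¬(t + 3 = t )) i) (vinj h)
        exact nodup5 (fun h => ynev (i+3) h.symm) (fun h => ynev' (i+3) h.symm)
          (fun h => xnev (i+3) h.symm) d2 hne' hyx (ynev i) hyx' (ynev' i) (xnev i)
      · intro h
        have key : ∀ i : ZMod 5, ¬(i = i + 3 + 1 ∨ i + 3 = i + 1) := by decide
        exact key i ((vadj (i + 3) i).mp h)
      · intro h
        have key : ∀ i : ZMod 5, ¬(i = i + 1 ∨ i = i + 1 + 2 ∨ i = i + 1 + 3) := by decide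
        exact key i ((hny i).mp h)
      · intro h
        have key : ∀ i : ZMod 5, ¬(i = i + 1 ∨ i = i + 1 + 2 ∨ i = i + 1 + 3) := by decide
        exact key i ((hny' i).mp h)
end

section
/- Let G be a {K4, fork}-free graph containing an induced 5-cycle H satisfying: every vertex outside H has either exactly two consecutive neighbors or exactly three pairwise nonconsecutive neighbors on H. Then G contains no odd hole of length greater than 19. -/
open SimpleGraph

theorem stmt9 {V : Type*} (G : SimpleGraph V) (hK4 : G.CliqueFree 4)
    (hfork : ¬HasInducedFork G)
    (v : ZMod 5 → V) (hH : IsInducedCycle G 5 v)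
    (hstar : ∀ u : V, u ∉ Set.range v → GoodAttach G v u) :
    ¬∃ (m : ℕ) (w : ZMod m → V), 19 < m ∧ Odd m ∧ IsInducedCycle G m w := by
  classical
  obtain ⟨-, hvinj, hvadj⟩ := hH
  rintro ⟨m, w, hm, hodd, hcyc⟩
  obtain ⟨-, hwinj, hwadj⟩ := hcyc
  haveI : NeZero m := ⟨by omega⟩
  have hone : (1 : ZMod m) ≠ 0 := by
    intro h
    have h2 : ((1 : ℕ) : ZMod m) = 0 := by exact_mod_cast h
    have h3 := (ZMod.natCast_eq_zero_iff 1 m).mp h2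
    have := Nat.le_of_dvd one_pos h3
    omega
  have hstep0 : ∀ x : ZMod m, x ≠ x + 1 := fun x h => hone (left_eq_add.mp h)
  have hone5 : (1 : ZMod 5) ≠ 0 := by decide
  -- every vertex of `w` outside `range v` is adjacent to two consecutive `v`'s
  have hQ : ∀ j : ZMod m, w j ∉ Set.range v →
      ∃ i : ZMod 5, G.Adj (w j) (v i) ∧ G.Adj (w j) (v (i + 1)) := by
    intro j hj
    rcases hstar (w j) hj with ⟨i, hi⟩ | ⟨i, hi⟩
    · exact ⟨i, (hi i).mpr (Or.inl rfl), (hi (i + 1)).mpr (Or.inr rfl)⟩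
    · exact ⟨i, (hi i).mpr (Or.inl rfl), (hi (i + 1)).mpr (Or.inr (Or.inl rfl))⟩
  set O : Finset (ZMod m) := Finset.univ.filter (fun j => w j ∉ Set.range v) with hOdef
  set B : Finset (ZMod m) := Finset.univ.filter (fun j => w j ∈ Set.range v) with hBdef
  have hOmem : ∀ j : ZMod m, j ∈ O ↔ w j ∉ Set.range v := by
    intro j; rw [hOdef]; simp
  have hBmem : ∀ j : ZMod m, j ∈ B ↔ w j ∈ Set.range v := by
    intro j; rw [hBdef]; simp
  have hcardm : Fintype.card (ZMod m) = m := ZMod.card m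
  have hOB : O = Bᶜ := by
    ext j; rw [Finset.mem_compl, hOmem, hBmem]
  have hcardOB : O.card + B.card = m := by
    rw [hOB, Finset.card_compl]
    have := Finset.card_le_univ B
    omega
  have hB5 : B.card ≤ 5 := by
    calc B.card = (B.image w).card := (Finset.card_image_of_injective B hwinj).symm
      _ ≤ ((Finset.univ : Finset (ZMod 5)).image v).card := by
          apply Finset.card_le_card
          intro aa haa
          rcases Finset.mem_image.mp haa with ⟨j, hj, rfl⟩
          rcases (hBmem j).mp hj with ⟨s, hs⟩
          exact Finset.mem_image.mpr ⟨s, Finset.mem_univ s, hs⟩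
      _ ≤ (Finset.univ : Finset (ZMod 5)).card := Finset.card_image_le
      _ = 5 := by simp
  -- choose, for each outside vertex, a consecutive pair of `v`-neighbors
  have hfex : ∀ j : ZMod m, ∃ i : ZMod 5, j ∈ O →
      G.Adj (w j) (v i) ∧ G.Adj (w j) (v (i + 1)) := by
    intro j
    by_cases hj : j ∈ O
    · obtain ⟨i, hi⟩ := hQ j ((hOmem j).mp hj); exact ⟨i, fun _ => hi⟩
    · exact ⟨0, fun h => absurd h hj⟩
  choose f hf using hfex
  -- pigeonhole: some consecutive pair is used by at least 4 outside vertices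
  obtain ⟨i₀, -, hF4⟩ := Finset.exists_lt_card_fiber_of_mul_lt_card_of_maps_to
      (fun j (_ : j ∈ O) => Finset.mem_univ (f j))
      (show (Finset.univ : Finset (ZMod 5)).card * 3 < O.card by
        have h5 : (Finset.univ : Finset (ZMod 5)).card = 5 := by simp
        obtain ⟨k, hk⟩ := hodd
        omega)
  set F : Finset (ZMod m) := O.filter (fun j => f j = i₀) with hFdef
  have hFO : ∀ j ∈ F, w j ∉ Set.range v := by
    intro j hj
    rw [hFdef] at hj
    exact (hOmem j).mp (Finset.mem_filter.mp hj).1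
  have hFadj : ∀ j ∈ F, G.Adj (w j) (v i₀) ∧ G.Adj (w j) (v (i₀ + 1)) := by
    intro j hj
    rw [hFdef] at hj
    obtain ⟨hjO, hji⟩ := Finset.mem_filter.mp hj
    have := hf j hjO
    rw [hji] at this
    exact this
  have hv01 : v i₀ ≠ v (i₀ + 1) := fun h => hone5 (left_eq_add.mp (hvinj h))
  have hadj01 : G.Adj (v i₀) (v (i₀ + 1)) := (hvadj i₀ (i₀ + 1)).mpr (Or.inl rfl)
  -- K4 from two adjacent vertices both attached to the pair (v i₀, v (i₀+1))
  have hK4' : ∀ p q : ZMod m, w p ∉ Set.range v → w q ∉ Set.range v → w p ≠ w q →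
      G.Adj (w p) (w q) → G.Adj (w p) (v i₀) → G.Adj (w p) (v (i₀ + 1)) →
      G.Adj (w q) (v i₀) → G.Adj (w q) (v (i₀ + 1)) → False := by
    intro p q hp hq hpq hadjpq hp0 hp1 hq0 hq1
    have n2 : v i₀ ≠ w p := fun h => hp ⟨i₀, h⟩
    have n3 : v i₀ ≠ w q := fun h => hq ⟨i₀, h⟩
    have n4 : v (i₀ + 1) ≠ w p := fun h => hp ⟨i₀ + 1, h⟩
    have n5 : v (i₀ + 1) ≠ w q := fun h => hq ⟨i₀ + 1, h⟩
    apply hK4 {v i₀, v (i₀ + 1), w p, w q}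
    constructor
    · rw [SimpleGraph.isClique_iff]
      intro a ha b hb hab
      simp only [Finset.coe_insert, Set.mem_insert_iff, Finset.coe_singleton,
        Set.mem_singleton_iff] at ha hb
      rcases ha with rfl | rfl | rfl | rfl <;> rcases hb with rfl | rfl | rfl | rfl <;>
        first
          | exact absurd rfl hab
          | assumption
          | exact hadj01.symm
          | exact hp0.symm
          | exact hp1.symm
          | exact hq0.symm
          | exact hq1.symm
          | exact hadjpq.symm
    · rw [Finset.card_insert_of_notMem (by simp [hv01, n2, n3]),
        Finset.card_insert_of_notMem (by simp [n4, n5]),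
        Finset.card_insert_of_notMem (by simp [hpq]),
        Finset.card_singleton]
  -- members of F are pairwise nonconsecutive on the cycle w
  have hFstep : ∀ p ∈ F, ∀ q ∈ F, q ≠ p + 1 := by
    intro p hp q hq h
    have hpq : p ≠ q := by rintro rfl; exact hstep0 p h
    have hadjpq : G.Adj (w p) (w q) := (hwadj p q).mpr (Or.inl h)
    exact hK4' p q (hFO p hp) (hFO q hq) (fun hh => hpq (hwinj hh)) hadjpq
      (hFadj p hp).1 (hFadj p hp).2 (hFadj q hq).1 (hFadj q hq).2
  have hFnadj : ∀ p ∈ F, ∀ q ∈ F, p ≠ q → ¬G.Adj (w p) (w q) := by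
    intro p hp q hq hne hadj
    rcases (hwadj p q).mp hadj with h | h
    · exact hFstep p hp q hq h
    · exact hFstep q hq p hp h
  -- three distinct members of F
  obtain ⟨a₁, ha₁⟩ := Finset.card_pos.mp (show 0 < F.card by omega)
  obtain ⟨a₂, ha₂'⟩ := Finset.card_pos.mp (show 0 < (F.erase a₁).card by
    rw [Finset.card_erase_of_mem ha₁]; omega)
  obtain ⟨a₃, ha₃'⟩ := Finset.card_pos.mp (show 0 < ((F.erase a₁).erase a₂).card by
    rw [Finset.card_erase_of_mem ha₂', Finset.card_erase_of_mem ha₁]; omega)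
  obtain ⟨h21, ha₂⟩ := Finset.mem_erase.mp ha₂'
  obtain ⟨h32, ha₃''⟩ := Finset.mem_erase.mp ha₃'
  obtain ⟨h31, ha₃⟩ := Finset.mem_erase.mp ha₃''
  -- a vertex adjacent to all of F is not on the cycle w
  have hcenter : ∀ s : ZMod 5, (∀ j ∈ F, G.Adj (w j) (v s)) → v s ∉ Set.range w := by
    intro s hs
    rintro ⟨τ, hτ⟩
    have key : ∀ j ∈ F, j = τ + 1 ∨ τ = j + 1 := by
      intro j hj
      have : G.Adj (w j) (w τ) := by rw [hτ]; exact hs j hj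
      exact ((hwadj j τ).mp this).symm
    have hRR : ∀ x y : ZMod m, τ = x + 1 → τ = y + 1 → x = y := fun x y hx hy =>
      add_right_cancel (hx.symm.trans hy)
    rcases key a₁ ha₁ with h1 | h1 <;> rcases key a₂ ha₂ with h2 | h2 <;>
      rcases key a₃ ha₃ with h3 | h3
    · exact h21 (h2.trans h1.symm)
    · exact h21 (h2.trans h1.symm)
    · exact h31 (h3.trans h1.symm)
    · exact h32 (hRR a₃ a₂ h3 h2)
    · exact h32 (h3.trans h2.symm)
    · exact h31 (hRR a₃ a₁ h3 h1)
    · exact h21 (hRR a₂ a₁ h2 h1)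
    · exact h21 (hRR a₂ a₁ h2 h1)
  have hvio : v i₀ ∉ Set.range w := hcenter i₀ (fun j hj => (hFadj j hj).1)
  have hvi1 : v (i₀ + 1) ∉ Set.range w := hcenter (i₀ + 1) (fun j hj => (hFadj j hj).2)
  -- hence B has at most 3 elements
  have h10 : i₀ + 1 ≠ i₀ := fun h => hone5 (by simpa using h)
  have hB3 : B.card ≤ 3 := by
    have h1 : B.card = (B.image w).card := (Finset.card_image_of_injective B hwinj).symm
    have h2 : B.image w ⊆ ((Finset.univ.erase i₀).erase (i₀ + 1)).image v := by
      intro aa haa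
      rcases Finset.mem_image.mp haa with ⟨j, hj, rfl⟩
      rcases (hBmem j).mp hj with ⟨s, hs⟩
      have hs0 : s ≠ i₀ := by rintro rfl; exact hvio ⟨j, hs.symm⟩
      have hs1 : s ≠ i₀ + 1 := by rintro rfl; exact hvi1 ⟨j, hs.symm⟩
      exact Finset.mem_image.mpr
        ⟨s, Finset.mem_erase.mpr ⟨hs1, Finset.mem_erase.mpr ⟨hs0, Finset.mem_univ s⟩⟩, hs⟩
    have h3 : ((Finset.univ.erase i₀).erase (i₀ + 1)).card = 3 := by
      rw [Finset.card_erase_of_mem (Finset.mem_erase.mpr ⟨h10, Finset.mem_univ _⟩),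
        Finset.card_erase_of_mem (Finset.mem_univ _)]
      simp
    calc B.card = (B.image w).card := h1
      _ ≤ (((Finset.univ.erase i₀).erase (i₀ + 1)).image v).card := Finset.card_le_card h2
      _ ≤ ((Finset.univ.erase i₀).erase (i₀ + 1)).card := Finset.card_image_le
      _ = 3 := h3
  -- the successor of any member of F must lie on `range v`
  have hFB : ∀ x ∈ F, x + 1 ∈ B := by
    intro x hxF
    by_contra hxB
    have hxO : w (x + 1) ∉ Set.range v := fun hmem => hxB ((hBmem (x + 1)).mpr hmem)
    -- pick two members of F different from x and x+2
    have h2card : 2 ≤ ((F.erase x).erase (x + 2)).card := by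
      have e1 := Finset.pred_card_le_card_erase (s := F) (a := x)
      have e2 := Finset.pred_card_le_card_erase (s := F.erase x) (a := x + 2)
      omega
    obtain ⟨b, hb', c, hc', hbc⟩ := Finset.one_lt_card.mp (by omega : 1 < ((F.erase x).erase (x + 2)).card)
    obtain ⟨hbx2, hb''⟩ := Finset.mem_erase.mp hb'
    obtain ⟨hbx, hbF⟩ := Finset.mem_erase.mp hb''
    obtain ⟨hcx2, hc''⟩ := Finset.mem_erase.mp hc'
    obtain ⟨hcx, hcF⟩ := Finset.mem_erase.mp hc''
    have h21m : ∀ y : ZMod m, y + 1 + 1 = y + 2 := by intro y; ring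
    -- the fork dichotomy: w (x+1) must be adjacent to v s for s = i₀, i₀+1
    have hfork' : ∀ s : ZMod 5, v s ∉ Set.range w → (∀ j ∈ F, G.Adj (w j) (v s)) →
        G.Adj (w (x + 1)) (v s) := by
      intro s hsw hsadj
      by_contra hnadj
      apply hfork
      refine ⟨v s, w b, w c, w x, w (x + 1), ?_, (hsadj b hbF).symm, (hsadj c hcF).symm,
        (hsadj x hxF).symm, (hwadj x (x + 1)).mpr (Or.inl rfl),
        hFnadj b hbF c hcF hbc, hFnadj b hbF x hxF hbx, hFnadj c hcF x hxF hcx,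
        fun h => hnadj h.symm, ?_, ?_⟩
      · -- Nodup
        have n1 : v s ≠ w b := fun h => hsw ⟨b, h.symm⟩
        have n2 : v s ≠ w c := fun h => hsw ⟨c, h.symm⟩
        have n3 : v s ≠ w x := fun h => hsw ⟨x, h.symm⟩
        have n4 : v s ≠ w (x + 1) := fun h => hsw ⟨x + 1, h.symm⟩
        have n5 : w b ≠ w c := fun h => hbc (hwinj h)
        have n6 : w b ≠ w x := fun h => hbx (hwinj h)
        have n7 : w b ≠ w (x + 1) := fun h => hFstep x hxF b hbF (hwinj h)
        have n8 : w c ≠ w x := fun h => hcx (hwinj h)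
        have n9 : w c ≠ w (x + 1) := fun h => hFstep x hxF c hcF (hwinj h)
        have n10 : w x ≠ w (x + 1) := fun h => hstep0 x (hwinj h)
        simp only [List.nodup_cons, List.mem_cons, List.mem_singleton, List.not_mem_nil,
          or_false, not_or, List.nodup_nil, and_true]
        exact ⟨⟨n1, n2, n3, n4⟩, ⟨n5, n6, n7⟩, ⟨n8, n9⟩, n10, not_false⟩
      · -- ¬ Adj (w b) (w (x+1))
        rw [hwadj]
        rintro (h | h)
        · exact hbx (add_right_cancel h).symm
        · rw [h21m] at h; exact hbx2 h
      · -- ¬ Adj (w c) (w (x+1))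
        rw [hwadj]
        rintro (h | h)
        · exact hcx (add_right_cancel h).symm
        · rw [h21m] at h; exact hcx2 h
    have h0 := hfork' i₀ hvio (fun j hj => (hFadj j hj).1)
    have h1 := hfork' (i₀ + 1) hvi1 (fun j hj => (hFadj j hj).2)
    exact hK4' x (x + 1) (hFO x hxF) hxO (fun h => hstep0 x (hwinj h))
      ((hwadj x (x + 1)).mpr (Or.inl rfl)) (hFadj x hxF).1 (hFadj x hxF).2 h0 h1
  -- but then F injects into B, contradicting |F| ≥ 4 > 3 ≥ |B|
  have hle : F.card ≤ B.card := by
    apply Finset.card_le_card_of_injOn (fun x => x + 1) hFB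
    intro p _ q _ h
    exact add_right_cancel h
  omega
end

section
/- If G contains an induced 5-cycle H and a vertex u outside H adjacent to exactly three consecutive vertices of H, then contracting the closed neighborhood of a vertex of H not adjacent to u (whose neighborhood on H ∪ {u} is an independent pair) yields a graph containing K4 as an induced subgraph. -/
open SimpleGraph

/-- The t-contraction of the vertex set `A` in `G`: the vertices of `A` are merged
into a single new vertex (`none`), adjacent to the outside neighbors of `A`. -/
def contractSet {V : Type*} (G : SimpleGraph V) (A : Set V) :
    SimpleGraph (Option {x : V // x ∉ A}) :=
  SimpleGraph.fromRel fun a b =>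
    match a, b with
    | some x, some y => G.Adj x.1 y.1
    | none, some y => ∃ z ∈ A, G.Adj z y.1
    | _, _ => False

lemma stmt10_aux {V : Type*} (G : SimpleGraph V) (A : Set V) (x y z : V)
    (hx : x ∉ A) (hy : y ∉ A) (hz : z ∉ A)
    (hxy : G.Adj x y) (hxz : G.Adj x z) (hyz : G.Adj y z)
    (hax : ∃ a ∈ A, G.Adj a x) (hay : ∃ a ∈ A, G.Adj a y) (haz : ∃ a ∈ A, G.Adj a z) :
    ∃ s, (contractSet G A).IsNClique 4 s := by
  classical
  have e1 : (contractSet G A).Adj none (some ⟨x, hx⟩) := by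
    rw [contractSet, SimpleGraph.fromRel_adj]
    exact ⟨by simp, Or.inl hax⟩
  have e2 : (contractSet G A).Adj none (some ⟨y, hy⟩) := by
    rw [contractSet, SimpleGraph.fromRel_adj]
    exact ⟨by simp, Or.inl hay⟩
  have e3 : (contractSet G A).Adj none (some ⟨z, hz⟩) := by
    rw [contractSet, SimpleGraph.fromRel_adj]
    exact ⟨by simp, Or.inl haz⟩
  have e4 : (contractSet G A).Adj (some ⟨x, hx⟩) (some ⟨y, hy⟩) := by
    rw [contractSet, SimpleGraph.fromRel_adj]
    exact ⟨by simp [hxy.ne], Or.inl hxy⟩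
  have e5 : (contractSet G A).Adj (some ⟨x, hx⟩) (some ⟨z, hz⟩) := by
    rw [contractSet, SimpleGraph.fromRel_adj]
    exact ⟨by simp [hxz.ne], Or.inl hxz⟩
  have e6 : (contractSet G A).Adj (some ⟨y, hy⟩) (some ⟨z, hz⟩) := by
    rw [contractSet, SimpleGraph.fromRel_adj]
    exact ⟨by simp [hyz.ne], Or.inl hyz⟩
  refine ⟨{(none : Option {w : V // w ∉ A}), some ⟨x, hx⟩, some ⟨y, hy⟩, some ⟨z, hz⟩}, ?_, ?_⟩
  · intro a ha b hb hne
    simp only [Finset.coe_insert, Set.mem_insert_iff, Finset.coe_singleton,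
      Set.mem_singleton_iff] at ha hb
    rcases ha with rfl | rfl | rfl | rfl <;> rcases hb with rfl | rfl | rfl | rfl <;>
      first
        | exact (hne rfl).elim
        | exact e1 | exact e2 | exact e3 | exact e4 | exact e5 | exact e6
        | exact e1.symm | exact e2.symm | exact e3.symm | exact e4.symm
        | exact e5.symm | exact e6.symm
  · rw [Finset.card_insert_of_notMem (by simp),
      Finset.card_insert_of_notMem (by simp [hxy.ne, hxz.ne]),
      Finset.card_insert_of_notMem (by simp [hyz.ne]), Finset.card_singleton]

theorem stmt10 {V : Type*} (G : SimpleGraph V)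
    (v : ZMod 5 → V) (hH : IsInducedCycle G 5 v)
    (u : V) (hu : u ∉ Set.range v) (i : ZMod 5)
    (hadj : ∀ k : ZMod 5, G.Adj u (v k) ↔ (k = i ∨ k = i + 1 ∨ k = i + 2)) :
    ∀ j : ZMod 5, ¬G.Adj u (v j) →
      ∃ s, (contractSet (G.induce (Set.range v ∪ {u}))
          (insert (⟨v j, Set.mem_union_left _ (Set.mem_range_self j)⟩ :
              ↥(Set.range v ∪ {u}))
            ((G.induce (Set.range v ∪ {u})).neighborSet
              ⟨v j, Set.mem_union_left _ (Set.mem_range_self j)⟩))).IsNClique 4 s := by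
  obtain ⟨-, hinj, hcyc⟩ := hH
  intro j hj
  have hd : j = i + 3 ∨ j = i + 4 := by
    have h := hj
    rw [hadj j] at h
    push_neg at h
    obtain ⟨h0, h1, h2⟩ := h
    exact (by decide : ∀ a b : ZMod 5, b ≠ a → b ≠ a + 1 → b ≠ a + 2 →
      (b = a + 3 ∨ b = a + 4)) i j h0 h1 h2
  set W : Set V := Set.range v ∪ {u} with hW
  have hvW : ∀ k, v k ∈ W := fun k => Or.inl ⟨k, rfl⟩
  have huW : u ∈ W := Or.inr rfl
  have hWadj : ∀ (a b : V) (ha : a ∈ W) (hb : b ∈ W),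
      (G.induce W).Adj ⟨a, ha⟩ ⟨b, hb⟩ ↔ G.Adj a b := fun _ _ _ _ => Iff.rfl
  have hmemA : ∀ (x : V) (hx : x ∈ W),
      ((⟨x, hx⟩ : W) ∈ insert (⟨v j, Set.mem_union_left _ (Set.mem_range_self j)⟩ : W)
        ((G.induce W).neighborSet ⟨v j, Set.mem_union_left _ (Set.mem_range_self j)⟩))
        ↔ (x = v j ∨ G.Adj (v j) x) := by
    intro x hx
    rw [Set.mem_insert_iff, SimpleGraph.mem_neighborSet, hWadj]
    constructor
    · rintro (h | h)
      · exact Or.inl (congrArg Subtype.val h)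
      · exact Or.inr h
    · rintro (rfl | h)
      · exact Or.inl (Subtype.ext rfl)
      · exact Or.inr h
  have hne : ∀ a : V, a ∈ W → a ≠ v j → ¬G.Adj (v j) a → True := fun _ _ _ _ => trivial
  rcases hd with rfl | rfl
  · -- j = i + 3
    refine stmt10_aux (G.induce W) _ ⟨u, huW⟩ ⟨v i, hvW i⟩ ⟨v (i + 1), hvW _⟩ ?_ ?_ ?_ ?_ ?_ ?_
      ?_ ?_ ?_
    · intro h
      rcases (hmemA u huW).1 h with h | h
      · exact hu ⟨i + 3, h.symm⟩
      · exact hj h.symm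
    · intro h
      rcases (hmemA _ (hvW i)).1 h with h | h
      · exact (by decide : ∀ a : ZMod 5, a ≠ a + 3) i (hinj h)
      · exact (by decide : ∀ a : ZMod 5, ¬(a = a + 3 + 1 ∨ a + 3 = a + 1)) i ((hcyc _ _).1 h)
    · intro h
      rcases (hmemA _ (hvW (i + 1))).1 h with h | h
      · exact (by decide : ∀ a : ZMod 5, a + 1 ≠ a + 3) i (hinj h)
      · exact (by decide : ∀ a : ZMod 5, ¬(a + 1 = a + 3 + 1 ∨ a + 3 = a + 1 + 1)) i
          ((hcyc _ _).1 h)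
    · exact (hWadj _ _ _ _).2 ((hadj i).2 (Or.inl rfl))
    · exact (hWadj _ _ _ _).2 ((hadj (i + 1)).2 (Or.inr (Or.inl rfl)))
    · exact (hWadj _ _ _ _).2 ((hcyc i (i + 1)).2 (Or.inl rfl))
    · refine ⟨⟨v (i + 2), hvW _⟩, ?_, ?_⟩
      · exact (hmemA _ _).2 (Or.inr ((hcyc _ _).2 (Or.inr
          ((by decide : ∀ a : ZMod 5, a + 3 = a + 2 + 1) i))))
      · exact (hWadj _ _ _ _).2 ((hadj (i + 2)).2 (Or.inr (Or.inr rfl))).symm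
    · refine ⟨⟨v (i + 4), hvW _⟩, ?_, ?_⟩
      · exact (hmemA _ _).2 (Or.inr ((hcyc _ _).2 (Or.inl
          ((by decide : ∀ a : ZMod 5, a + 4 = a + 3 + 1) i))))
      · exact (hWadj _ _ _ _).2 ((hcyc _ _).2 (Or.inl
          ((by decide : ∀ a : ZMod 5, a = a + 4 + 1) i)))
    · refine ⟨⟨v (i + 2), hvW _⟩, ?_, ?_⟩
      · exact (hmemA _ _).2 (Or.inr ((hcyc _ _).2 (Or.inr
          ((by decide : ∀ a : ZMod 5, a + 3 = a + 2 + 1) i))))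
      · exact (hWadj _ _ _ _).2 ((hcyc _ _).2 (Or.inr
          ((by decide : ∀ a : ZMod 5, a + 2 = a + 1 + 1) i)))
  · -- j = i + 4
    refine stmt10_aux (G.induce W) _ ⟨u, huW⟩ ⟨v (i + 1), hvW _⟩ ⟨v (i + 2), hvW _⟩ ?_ ?_ ?_
      ?_ ?_ ?_ ?_ ?_ ?_
    · intro h
      rcases (hmemA u huW).1 h with h | h
      · exact hu ⟨i + 4, h.symm⟩
      · exact hj h.symm
    · intro h
      rcases (hmemA _ (hvW (i + 1))).1 h with h | h
      · exact (by decide : ∀ a : ZMod 5, a + 1 ≠ a + 4) i (hinj h)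
      · exact (by decide : ∀ a : ZMod 5, ¬(a + 1 = a + 4 + 1 ∨ a + 4 = a + 1 + 1)) i
          ((hcyc _ _).1 h)
    · intro h
      rcases (hmemA _ (hvW (i + 2))).1 h with h | h
      · exact (by decide : ∀ a : ZMod 5, a + 2 ≠ a + 4) i (hinj h)
      · exact (by decide : ∀ a : ZMod 5, ¬(a + 2 = a + 4 + 1 ∨ a + 4 = a + 2 + 1)) i
          ((hcyc _ _).1 h)
    · exact (hWadj _ _ _ _).2 ((hadj (i + 1)).2 (Or.inr (Or.inl rfl)))
    · exact (hWadj _ _ _ _).2 ((hadj (i + 2)).2 (Or.inr (Or.inr rfl)))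
    · exact (hWadj _ _ _ _).2 ((hcyc (i + 1) (i + 2)).2 (Or.inl
        ((by decide : ∀ a : ZMod 5, a + 2 = a + 1 + 1) i)))
    · refine ⟨⟨v i, hvW _⟩, ?_, ?_⟩
      · exact (hmemA _ _).2 (Or.inr ((hcyc _ _).2 (Or.inl
          ((by decide : ∀ a : ZMod 5, a = a + 4 + 1) i))))
      · exact (hWadj _ _ _ _).2 ((hadj i).2 (Or.inl rfl)).symm
    · refine ⟨⟨v i, hvW _⟩, ?_, ?_⟩
      · exact (hmemA _ _).2 (Or.inr ((hcyc _ _).2 (Or.inl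
          ((by decide : ∀ a : ZMod 5, a = a + 4 + 1) i))))
      · exact (hWadj _ _ _ _).2 ((hcyc _ _).2 (Or.inl rfl))
    · refine ⟨⟨v (i + 3), hvW _⟩, ?_, ?_⟩
      · exact (hmemA _ _).2 (Or.inr ((hcyc _ _).2 (Or.inr
          ((by decide : ∀ a : ZMod 5, a + 4 = a + 3 + 1) i))))
      · exact (hWadj _ _ _ _).2 ((hcyc _ _).2 (Or.inr
          ((by decide : ∀ a : ZMod 5, a + 3 = a + 2 + 1) i)))
end

section
/- Let G be a graph and w : V(G) → Z_{≥0} a weight function. Suppose (1) there exists a clique K of at most three vertices such that the maximum w-weight of an independent set in G − K is strictly less than the maximum w-weight α_w(G) of an independent set in G, and (2) for every weight function w' with total weight strictly less than that of w there exists a w'-cover of cost α_{w'}(G). Then there exists a w-cover of G of cost α_w(G). -/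
open SimpleGraph
open scoped Classical

/-- `α_w(G)`: the maximum total weight of an independent set of `G`. -/
noncomputable def alphaW {V : Type*} (G : SimpleGraph V) (w : V → ℕ) : ℕ :=
  sSup {n | ∃ S : Finset V, IsIS G (↑S : Set V) ∧ n = ∑ x ∈ S, w x}

/-- The maximum total weight of an independent set of `G` avoiding `K`,
i.e. `α_w(G - K)`. -/
noncomputable def alphaWAvoid {V : Type*} (G : SimpleGraph V) (w : V → ℕ)
    (K : Finset V) : ℕ :=
  sSup {n | ∃ S : Finset V, IsIS G (↑S : Set V) ∧ Disjoint S K ∧ n = ∑ x ∈ S, w x}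

/-- A `w`-cover of `G`: a multiset of vertices, edges, and odd cycles such that
every vertex `x` lies in at least `w x` of the elements. -/
structure WCover {V : Type*} (G : SimpleGraph V) (w : V → ℕ) where
  verts : Multiset V
  edges : Multiset (Sym2 V)
  cycles : Multiset (Σ a : V, G.Walk a a)
  edges_mem : ∀ e ∈ edges, e ∈ G.edgeSet
  cycles_ok : ∀ c ∈ cycles, c.2.IsCycle ∧ Odd c.2.length
  covers : ∀ x : V, w x ≤ verts.count x
      + Multiset.card (edges.filter (fun e => x ∈ e))
      + Multiset.card (cycles.filter (fun c => x ∈ c.2.support))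

/-- The cost of a `w`-cover: vertices and edges cost 1 and an odd cycle `C`
costs `(|C| - 1) / 2`. -/
noncomputable def WCover.cost {V : Type*} {G : SimpleGraph V} {w : V → ℕ}
    (c : WCover G w) : ℕ :=
  Multiset.card c.verts + Multiset.card c.edges +
    (c.cycles.map (fun cy => (cy.2.length - 1) / 2)).sum

section Helpers

variable {V : Type*} [Fintype V] (G : SimpleGraph V) (w : V → ℕ)

lemma alphaW_bdd : BddAbove {n | ∃ S : Finset V, IsIS G (↑S : Set V) ∧ n = ∑ x ∈ S, w x} := by
  refine ⟨∑ x, w x, ?_⟩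
  rintro n ⟨S, hS, rfl⟩
  exact Finset.sum_le_sum_of_subset (S.subset_univ)

lemma alphaWAvoid_bdd (K : Finset V) : BddAbove
    {n | ∃ S : Finset V, IsIS G (↑S : Set V) ∧ Disjoint S K ∧ n = ∑ x ∈ S, w x} := by
  refine ⟨∑ x, w x, ?_⟩
  rintro n ⟨S, hS, _, rfl⟩
  exact Finset.sum_le_sum_of_subset (S.subset_univ)

lemma sum_le_alphaW {S : Finset V} (hS : IsIS G (↑S : Set V)) :
    ∑ x ∈ S, w x ≤ alphaW G w :=
  le_csSup (alphaW_bdd G w) ⟨S, hS, rfl⟩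

lemma sum_le_alphaWAvoid {K S : Finset V} (hS : IsIS G (↑S : Set V)) (hd : Disjoint S K) :
    ∑ x ∈ S, w x ≤ alphaWAvoid G w K :=
  le_csSup (alphaWAvoid_bdd G w K) ⟨S, hS, hd, rfl⟩

lemma zero_mem_alphaW_set : (0 : ℕ) ∈ {n | ∃ S : Finset V, IsIS G (↑S : Set V) ∧ n = ∑ x ∈ S, w x} :=
  ⟨∅, by intro a ha; simp at ha, by simp⟩

lemma exists_alphaW : ∃ S : Finset V, IsIS G (↑S : Set V) ∧ alphaW G w = ∑ x ∈ S, w x :=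
  Nat.sSup_mem ⟨0, zero_mem_alphaW_set G w⟩ (alphaW_bdd G w)

lemma inter_card_le_one {V : Type*} {G : SimpleGraph V} {S K : Finset V}
    (hS : IsIS G (↑S : Set V)) (hK : G.IsClique (↑K : Set V)) : (S ∩ K).card ≤ 1 := by
  by_contra h
  push_neg at h
  obtain ⟨a, ha, b, hb, hab⟩ := Finset.one_lt_card.mp h
  simp only [Finset.mem_inter] at ha hb
  exact hS (by exact_mod_cast ha.1) (by exact_mod_cast hb.1) (hK ha.2 hb.2 hab)

lemma triangle_isCycle {V : Type*} {G : SimpleGraph V} {a b c : V}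
    (hab : G.Adj a b) (hbc : G.Adj b c) (hca : G.Adj c a) :
    (Walk.cons hab (Walk.cons hbc (Walk.cons hca Walk.nil))).IsCycle := by
  have h1 : a ≠ b := hab.ne
  have h2 : b ≠ c := hbc.ne
  have h3 : c ≠ a := hca.ne
  constructor
  · constructor
    · simp [Walk.isTrail_def, Sym2.eq_iff]
      tauto
    · simp
  · simp [List.nodup_cons]
    tauto

end Helpers

theorem stmt14 {V : Type*} [Fintype V] (G : SimpleGraph V) (w : V → ℕ)
    (h1 : ∃ K : Finset V, G.IsClique (↑K : Set V) ∧ K.card ≤ 3 ∧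
      alphaWAvoid G w K < alphaW G w)
    (h2 : ∀ w' : V → ℕ, ∑ x, w' x < ∑ x, w x →
      ∃ c : WCover G w', c.cost = alphaW G w') :
    ∃ c : WCover G w, c.cost = alphaW G w := by
  obtain ⟨K, hclique, hcard, hlt⟩ := h1
  obtain ⟨T, hT, hTsum⟩ := exists_alphaW G w
  -- some vertex of K has positive weight
  have hKpos : ∃ v ∈ K, 0 < w v := by
    by_contra h
    push_neg at h
    have h0 : ∀ v ∈ K, w v = 0 := fun v hv => Nat.le_zero.mp (h v hv)
    have hsub : IsIS G (↑(T \ K) : Set V) := by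
      intro x hx y hy
      exact hT (by simpa using (Finset.mem_sdiff.mp (by exact_mod_cast hx)).1)
        (by simpa using (Finset.mem_sdiff.mp (by exact_mod_cast hy)).1)
    have heq : ∑ x ∈ T \ K, w x = ∑ x ∈ T, w x := by
      refine Finset.sum_subset Finset.sdiff_subset ?_
      intro x hx hnx
      have : x ∈ K := by
        by_contra hk
        exact hnx (Finset.mem_sdiff.mpr ⟨hx, hk⟩)
      exact h0 x this
    have : alphaW G w ≤ alphaWAvoid G w K := by
      rw [hTsum, ← heq]
      exact sum_le_alphaWAvoid G w hsub Finset.sdiff_disjoint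
    omega
  obtain ⟨v, hvK, hvpos⟩ := hKpos
  set w' : V → ℕ := fun x => if x ∈ K then w x - 1 else w x with hw'
  have hle : ∀ x, w' x ≤ w x := by
    intro x; simp only [hw']; split <;> omega
  have hup : ∀ x, w x ≤ w' x + (if x ∈ K then 1 else 0) := by
    intro x; simp only [hw']; split <;> omega
  have htotal : ∑ x, w' x < ∑ x, w x := by
    refine Finset.sum_lt_sum (fun x _ => hle x) ⟨v, Finset.mem_univ v, ?_⟩
    simp only [hw', if_pos hvK]
    omega
  -- alphaW G w' + 1 = alphaW G w
  have hαpos : 1 ≤ alphaW G w := by omega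
  have le1 : alphaW G w' + 1 ≤ alphaW G w := by
    have : alphaW G w' ≤ alphaW G w - 1 := by
      refine csSup_le ⟨0, zero_mem_alphaW_set G w'⟩ ?_
      rintro n ⟨S, hS, rfl⟩
      by_cases hcase : ∃ u ∈ S ∩ K, 0 < w u
      · obtain ⟨u, hu, hupos⟩ := hcase
        simp only [Finset.mem_inter] at hu
        have hlt' : ∑ x ∈ S, w' x < ∑ x ∈ S, w x := by
          refine Finset.sum_lt_sum (fun x _ => hle x) ⟨u, hu.1, ?_⟩
          simp only [hw', if_pos hu.2]
          omega
        have := sum_le_alphaW G w hS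
        omega
      · push_neg at hcase
        have hzero : ∀ u ∈ S, u ∈ K → w u = 0 := fun u hu huK =>
          Nat.le_zero.mp (hcase u (Finset.mem_inter.mpr ⟨hu, huK⟩))
        have hsub : IsIS G (↑(S \ K) : Set V) := by
          intro x hx y hy
          exact hS (by simpa using (Finset.mem_sdiff.mp (by exact_mod_cast hx)).1)
            (by simpa using (Finset.mem_sdiff.mp (by exact_mod_cast hy)).1)
        have heq1 : ∑ x ∈ S \ K, w' x = ∑ x ∈ S, w' x := by
          refine Finset.sum_subset Finset.sdiff_subset ?_
          intro x hx hnx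
          have hxK : x ∈ K := by
            by_contra hk
            exact hnx (Finset.mem_sdiff.mpr ⟨hx, hk⟩)
          have := hzero x hx hxK
          have := hle x
          omega
        have heq2 : ∑ x ∈ S \ K, w' x = ∑ x ∈ S \ K, w x := by
          refine Finset.sum_congr rfl ?_
          intro x hx
          have : x ∉ K := (Finset.mem_sdiff.mp hx).2
          simp [hw', this]
        have := sum_le_alphaWAvoid G w hsub (K := K) Finset.sdiff_disjoint
        omega
    omega
  have le2 : alphaW G w ≤ alphaW G w' + 1 := by
    have hsum : ∑ x ∈ T, w x ≤ ∑ x ∈ T, w' x + (T ∩ K).card := by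
      calc ∑ x ∈ T, w x ≤ ∑ x ∈ T, (w' x + (if x ∈ K then 1 else 0)) :=
            Finset.sum_le_sum (fun x _ => hup x)
        _ = ∑ x ∈ T, w' x + ∑ x ∈ T, (if x ∈ K then (1:ℕ) else 0) := Finset.sum_add_distrib
        _ = ∑ x ∈ T, w' x + (T ∩ K).card := by
            rw [Finset.sum_ite_mem]
            simp
    have hTK := inter_card_le_one hT hclique (K := K)
    have := sum_le_alphaW G w' hT
    omega
  have halpha : alphaW G w' + 1 = alphaW G w := le_antisymm le1 le2
  obtain ⟨c', hc'⟩ := h2 w' htotal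
  -- split on the size of K
  have hKne : K.Nonempty := ⟨v, hvK⟩
  have hcard1 : 1 ≤ K.card := Finset.card_pos.mpr hKne
  interval_cases hK : K.card
  · -- card 1
    obtain ⟨a, rfl⟩ := Finset.card_eq_one.mp hK
    refine ⟨⟨a ::ₘ c'.verts, c'.edges, c'.cycles, c'.edges_mem, c'.cycles_ok, ?_⟩, ?_⟩
    · intro x
      have hcov := c'.covers x
      have h₂ := hup x
      rw [Multiset.count_cons]
      simp only [Finset.mem_singleton] at h₂
      by_cases hx : x = a
      · rw [if_pos hx] at h₂ ⊢
        omega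
      · rw [if_neg hx] at h₂ ⊢
        omega
    · unfold WCover.cost at hc' ⊢
      simp only [Multiset.card_cons]
      omega
  · -- card 2
    obtain ⟨a, b, hab, rfl⟩ := Finset.card_eq_two.mp hK
    have hadj : G.Adj a b := hclique (by simp) (by simp) hab
    refine ⟨⟨c'.verts, s(a, b) ::ₘ c'.edges, c'.cycles, ?_, c'.cycles_ok, ?_⟩, ?_⟩
    · intro e he
      rcases Multiset.mem_cons.mp he with rfl | he'
      · exact hadj
      · exact c'.edges_mem e he'
    · intro x
      have hcov := c'.covers x
      have h₂ := hup x
      rw [Multiset.filter_cons]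
      by_cases hx : x ∈ s(a, b)
      · have hxK : x ∈ ({a, b} : Finset V) := by
          rcases Sym2.mem_iff.mp hx with rfl | rfl <;> simp
        rw [if_pos hx]
        rw [if_pos hxK] at h₂
        simp only [Multiset.card_add, Multiset.card_singleton]
        omega
      · have hxK : x ∉ ({a, b} : Finset V) := by
          simp only [Finset.mem_insert, Finset.mem_singleton]
          rintro (rfl | rfl) <;> simp [Sym2.mem_iff] at hx
        rw [if_neg hx]
        rw [if_neg hxK] at h₂
        simp only [Multiset.card_add, Multiset.card_zero]
        omega
    · unfold WCover.cost at hc' ⊢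
      simp only [Multiset.card_cons]
      omega
  · -- card 3
    obtain ⟨a, b, c, hab, hac, hbc, rfl⟩ := Finset.card_eq_three.mp hK
    have hadjab : G.Adj a b := hclique (by simp) (by simp) hab
    have hadjbc : G.Adj b c := hclique (by simp) (by simp) hbc
    have hadjca : G.Adj c a := hclique (by simp) (by simp) (Ne.symm hac)
    set W : G.Walk a a := Walk.cons hadjab (Walk.cons hadjbc (Walk.cons hadjca Walk.nil))
      with hWdef
    have hWcyc : W.IsCycle := triangle_isCycle hadjab hadjbc hadjca
    have hWlen : W.length = 3 := by simp [hWdef]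
    have hWsupp : W.support = [a, b, c, a] := by simp [hWdef]
    refine ⟨⟨c'.verts, c'.edges, ⟨a, W⟩ ::ₘ c'.cycles, c'.edges_mem, ?_, ?_⟩, ?_⟩
    · intro cy hcy
      rcases Multiset.mem_cons.mp hcy with rfl | hcy'
      · exact ⟨hWcyc, by rw [hWlen]; exact ⟨1, rfl⟩⟩
      · exact c'.cycles_ok cy hcy'
    · intro x
      have hcov := c'.covers x
      have h₂ := hup x
      rw [Multiset.filter_cons]
      by_cases hx : x ∈ W.support
      · have hxK : x ∈ ({a, b, c} : Finset V) := by
          rw [hWsupp] at hx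
          simp only [List.mem_cons, List.not_mem_nil, or_false] at hx
          simp only [Finset.mem_insert, Finset.mem_singleton]
          tauto
        rw [if_pos hx]
        rw [if_pos hxK] at h₂
        simp only [Multiset.card_add, Multiset.card_singleton]
        omega
      · have hxK : x ∉ ({a, b, c} : Finset V) := by
          intro hxK
          apply hx
          rw [hWsupp]
          simp only [Finset.mem_insert, Finset.mem_singleton] at hxK
          simp only [List.mem_cons, List.not_mem_nil, or_false]
          tauto
        rw [if_neg hx]
        rw [if_neg hxK] at h₂
        simp only [Multiset.card_add, Multiset.card_zero]
        omega
    · unfold WCover.cost at hc' ⊢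
      simp only [Multiset.map_cons, Multiset.sum_cons, hWlen]
      omega
end

section
/- Let G be a {K4, W5, fork}-free graph containing an induced 5-cycle H with vertices v1,...,v5 (indices mod 5), where every vertex outside H has either exactly two consecutive or exactly three pairwise nonconsecutive neighbors on H. With U_i the outside vertices adjacent to v_{i+2} and v_{i+3}, U_i^- = U_i \ N(v_i), and assuming U_i^+ = U_i ∩ N(v_i) nonempty: every vertex of U_i is adjacent to every vertex of U_{i-1}^- ∪ U_{i+1}^-, and every vertex of U_{i+1}^- is adjacent to every vertex of U_{i+2}^-. -/
open SimpleGraph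

lemma zshift5 (i : ZMod 5) {a b c : ZMod 5} (h : a + b = c) : i + a + b = i + c := by
  rw [add_assoc, h]

lemma znodup5 {α : Type*} {a b c d e : α} (h1 : a ≠ b) (h2 : a ≠ c) (h3 : a ≠ d) (h4 : a ≠ e)
    (h5 : b ≠ c) (h6 : b ≠ d) (h7 : b ≠ e) (h8 : c ≠ d) (h9 : c ≠ e) (h10 : d ≠ e) :
    ([a, b, c, d, e] : List α).Nodup := by
  simp [h1, h2, h3, h4, h5, h6, h7, h8, h9, h10]

lemma zpat2 : ∀ j k p : ZMod 5, (j+2 = p ∨ j+2 = p+1) → (j+3 = p ∨ j+3 = p+1) →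
    (k = p ∨ k = p+1) → (k = j ∨ k = j+2 ∨ k = j+3) := by decide

lemma zpat3 : ∀ j k p : ZMod 5, (j+2 = p ∨ j+2 = p+1 ∨ j+2 = p+3) →
    (j+3 = p ∨ j+3 = p+1 ∨ j+3 = p+3) → (k = p ∨ k = p+1 ∨ k = p+3) →
    (k = j ∨ k = j+2 ∨ k = j+3) := by decide

theorem stmt16 {V : Type*} (G : SimpleGraph V) (hK4 : G.CliqueFree 4)
    (hW5 : ¬HasInducedW5 G) (hfork : ¬HasInducedFork G)
    (v : ZMod 5 → V) (hH : IsInducedCycle G 5 v)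
    (hstar : ∀ u : V, u ∉ Set.range v → GoodAttach G v u)
    (i : ZMod 5) (hne : (UsetP G v i).Nonempty) :
    (∀ x ∈ Uset G v i, ∀ y ∈ UsetM G v (i - 1) ∪ UsetM G v (i + 1), G.Adj x y) ∧
    (∀ x ∈ UsetM G v (i + 1), ∀ y ∈ UsetM G v (i + 2), G.Adj x y) := by
  obtain ⟨-, hinj, hadj⟩ := hH
  obtain ⟨a, ha⟩ := hne
  obtain ⟨⟨haR, ha2, ha3⟩, ha0⟩ := ha
  have ha0' : G.Adj a (v (i + 0)) := by rwa [add_zero]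
  -- basic index tools
  have cancel : ∀ x y : ZMod 5, i + x = i + y → x = y := fun x y h => by
    exact add_left_cancel h
  have hvne2 : ∀ x y : ZMod 5, x ≠ y → v (i + x) ≠ v (i + y) := fun x y h hc =>
    h (cancel _ _ (hinj hc))
  have hne_out : ∀ (u : V), u ∉ Set.range v → ∀ k : ZMod 5, u ≠ v k :=
    fun u hu k h => hu ⟨k, h.symm⟩
  have hvadj' : ∀ c d : ZMod 5, c + 1 = d → G.Adj (v (i + c)) (v (i + d)) := by
    intro c d h
    exact (hadj _ _).2 (Or.inl (by rw [← h, ← add_assoc]))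
  have hvnadj' : ∀ c d : ZMod 5, c + 1 ≠ d → d + 1 ≠ c → ¬G.Adj (v (i + c)) (v (i + d)) := by
    intro c d h1 h2 hh
    rcases (hadj _ _).1 hh with e | e
    · rw [add_assoc] at e; exact h1 (cancel _ _ e).symm
    · rw [add_assoc] at e; exact h2 (cancel _ _ e).symm
  -- neighborhood characterization of vertices in any U_j
  have key : ∀ (j : ZMod 5) (u : V), u ∉ Set.range v → G.Adj u (v (j+2)) → G.Adj u (v (j+3)) →
      ∀ k, G.Adj u (v k) → k = j ∨ k = j + 2 ∨ k = j + 3 := by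
    intro j u hu h2 h3 k hk
    rcases hstar u hu with ⟨p, hp⟩ | ⟨p, hp⟩
    · exact zpat2 j k p ((hp _).1 h2) ((hp _).1 h3) ((hp _).1 hk)
    · exact zpat3 j k p ((hp _).1 h2) ((hp _).1 h3) ((hp _).1 hk)
  have key2 : ∀ (j e1 e2 e3 : ZMod 5), j = i + e1 → j + 2 = i + e2 → j + 3 = i + e3 →
      ∀ u, u ∉ Set.range v → G.Adj u (v (j+2)) → G.Adj u (v (j+3)) →
      ∀ c, G.Adj u (v (i + c)) → c = e1 ∨ c = e2 ∨ c = e3 := by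
    intro j e1 e2 e3 h1 h2 h3 u hu a2 a3 c hc
    rcases key j u hu a2 a3 (i + c) hc with e | e | e
    · exact Or.inl (cancel _ _ (e.trans h1))
    · exact Or.inr (Or.inl (cancel _ _ (e.trans h2)))
    · exact Or.inr (Or.inr (cancel _ _ (e.trans h3)))
  have notk : ∀ {u : V} {A B C : ZMod 5},
      (∀ c, G.Adj u (v (i + c)) → c = A ∨ c = B ∨ c = C) →
      ∀ c, c ≠ A → c ≠ B → c ≠ C → ¬G.Adj u (v (i + c)) := by
    intro u A B C hk c h1 h2 h3 h
    rcases hk c h with e | e | e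
    exacts [h1 e, h2 e, h3 e]
  have hak : ∀ c, G.Adj a (v (i + c)) → c = 0 ∨ c = 2 ∨ c = 3 :=
    key2 i 0 2 3 (add_zero i).symm rfl rfl a haR ha2 ha3
  -- K4-freeness: two vertices of U_i are never adjacent
  have hK4' : ∀ x b : V, x ∉ Set.range v → G.Adj x (v (i+2)) → G.Adj x (v (i+3)) →
      G.Adj b (v (i+2)) → G.Adj b (v (i+3)) → ¬G.Adj x b := by
    intro x b hxR hx2 hx3 hb2 hb3 hxb
    classical
    have h23 : G.Adj (v (i+2)) (v (i+3)) := hvadj' 2 3 (by decide)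
    refine hK4 {x, b, v (i+2), v (i+3)} ⟨?_, ?_⟩
    · intro p hp q hq hpq
      simp only [Finset.coe_insert, Set.mem_insert_iff, Finset.coe_singleton,
        Set.mem_singleton_iff] at hp hq
      rcases hp with rfl | rfl | rfl | rfl <;> rcases hq with rfl | rfl | rfl | rfl <;>
        first
          | exact absurd rfl hpq
          | exact hxb | exact hxb.symm | exact hx2 | exact hx2.symm
          | exact hx3 | exact hx3.symm | exact hb2 | exact hb2.symm
          | exact hb3 | exact hb3.symm | exact h23 | exact h23.symm
    · have n1 : x ≠ b := hxb.ne
      have n2 : x ≠ v (i+2) := hne_out x hxR _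
      have n3 : x ≠ v (i+3) := hne_out x hxR _
      have n4 : b ≠ v (i+2) := hb2.ne
      have n5 : b ≠ v (i+3) := hb3.ne
      have n6 : v (i+2) ≠ v (i+3) := hvne2 2 3 (by decide)
      rw [Finset.card_insert_of_notMem (by simp [n1, n2, n3]),
        Finset.card_insert_of_notMem (by simp [n4, n5]),
        Finset.card_insert_of_notMem (by simp [n6]), Finset.card_singleton]
  -- Claim A : U_i^+ is complete to U_{i+1}^-
  have claimA : ∀ b y : V, b ∈ UsetP G v i → y ∈ UsetM G v (i+1) → G.Adj b y := by
    rintro b y ⟨⟨hbR, hb2, hb3⟩, hb0⟩ ⟨⟨hyR, hy3, hy4⟩, hy1⟩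
    by_contra hby
    rw [← add_zero i] at hb0
    have hbk := key2 i 0 2 3 (add_zero i).symm rfl rfl b hbR hb2 hb3
    have hyk := key2 (i+1) 1 3 4 rfl (zshift5 i (by decide)) (zshift5 i (by decide))
      y hyR hy3 hy4
    rw [zshift5 i (by decide : (1:ZMod 5) + 2 = 3)] at hy3
    rw [zshift5 i (by decide : (1:ZMod 5) + 3 = 4)] at hy4
    refine hfork ⟨v (i+0), v (i+1), b, v (i+4), y,
      znodup5 (hvne2 0 1 (by decide)) ((hne_out b hbR _).symm) (hvne2 0 4 (by decide))
        ((hne_out y hyR _).symm) ((hne_out b hbR _).symm) (hvne2 1 4 (by decide))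
        ((hne_out y hyR _).symm) (hne_out b hbR _)
        (fun h => notk hyk 0 (by decide) (by decide) (by decide) (h ▸ hb0))
        ((hne_out y hyR _).symm),
      hvadj' 0 1 (by decide), hb0.symm, (hvadj' 4 0 (by decide)).symm, hy4.symm,
      fun h => notk hbk 1 (by decide) (by decide) (by decide) h.symm,
      hvnadj' 1 4 (by decide) (by decide),
      fun h => notk hbk 4 (by decide) (by decide) (by decide) h,
      fun h => notk hyk 0 (by decide) (by decide) (by decide) h.symm,
      fun h => hy1 h.symm, hby⟩
  -- Claim A' : U_i^+ is complete to U_{i+4}^-  (i.e. U_{i-1}^-)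
  have claimA' : ∀ b y : V, b ∈ UsetP G v i → y ∈ UsetM G v (i+4) → G.Adj b y := by
    rintro b y ⟨⟨hbR, hb2, hb3⟩, hb0⟩ ⟨⟨hyR, hy3, hy4⟩, hy1⟩
    by_contra hby
    rw [← add_zero i] at hb0
    have hbk := key2 i 0 2 3 (add_zero i).symm rfl rfl b hbR hb2 hb3
    have hyk := key2 (i+4) 4 1 2 rfl (zshift5 i (by decide)) (zshift5 i (by decide))
      y hyR hy3 hy4
    rw [zshift5 i (by decide : (4:ZMod 5) + 2 = 1)] at hy3
    rw [zshift5 i (by decide : (4:ZMod 5) + 3 = 2)] at hy4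
    refine hfork ⟨v (i+0), v (i+4), b, v (i+1), y,
      znodup5 (hvne2 0 4 (by decide)) ((hne_out b hbR _).symm) (hvne2 0 1 (by decide))
        ((hne_out y hyR _).symm) ((hne_out b hbR _).symm) (hvne2 4 1 (by decide))
        ((hne_out y hyR _).symm) (hne_out b hbR _)
        (fun h => notk hyk 0 (by decide) (by decide) (by decide) (h ▸ hb0))
        ((hne_out y hyR _).symm),
      (hvadj' 4 0 (by decide)).symm, hb0.symm, hvadj' 0 1 (by decide), hy3.symm,
      fun h => notk hbk 4 (by decide) (by decide) (by decide) h.symm,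
      hvnadj' 4 1 (by decide) (by decide),
      fun h => notk hbk 1 (by decide) (by decide) (by decide) h,
      fun h => notk hyk 0 (by decide) (by decide) (by decide) h.symm,
      fun h => hy1 h.symm, hby⟩
  -- Claim C : U_i^- is complete to U_{i+1}^-
  have claimC : ∀ x y : V, x ∈ UsetM G v i → y ∈ UsetM G v (i+1) → G.Adj x y := by
    rintro x y ⟨⟨hxR, hx2, hx3⟩, hx0⟩ hy
    have hay : G.Adj a y := claimA a y ⟨⟨haR, ha2, ha3⟩, ha0⟩ hy
    obtain ⟨⟨hyR, hy3, hy4⟩, hy1⟩ := hy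
    by_contra hxy
    have hxa : ¬G.Adj x a := hK4' x a hxR hx2 hx3 ha2 ha3
    rw [← add_zero i] at hx0
    have hyk := key2 (i+1) 1 3 4 rfl (zshift5 i (by decide)) (zshift5 i (by decide))
      y hyR hy3 hy4
    rw [zshift5 i (by decide : (1:ZMod 5) + 2 = 3)] at hy3
    refine hfork ⟨a, v (i+0), y, v (i+2), x,
      znodup5 (hne_out a haR _) hay.ne (hne_out a haR _)
        (fun h => hx0 (by rw [← h]; exact ha0'))
        ((hne_out y hyR _).symm) (hvne2 0 2 (by decide)) ((hne_out x hxR _).symm)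
        (hne_out y hyR _)
        (fun h => notk hyk 2 (by decide) (by decide) (by decide) (by rw [h]; exact hx2))
        ((hne_out x hxR _).symm),
      ha0', hay, ha2, hx2.symm,
      fun h => notk hyk 0 (by decide) (by decide) (by decide) h.symm,
      hvnadj' 0 2 (by decide) (by decide),
      fun h => notk hyk 2 (by decide) (by decide) (by decide) h,
      fun h => hxa h.symm,
      fun h => hx0 h.symm, fun h => hxy h.symm⟩
  -- Claim C' : U_i^- is complete to U_{i+4}^-
  have claimC' : ∀ x y : V, x ∈ UsetM G v i → y ∈ UsetM G v (i+4) → G.Adj x y := by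
    rintro x y ⟨⟨hxR, hx2, hx3⟩, hx0⟩ hy
    have hay : G.Adj a y := claimA' a y ⟨⟨haR, ha2, ha3⟩, ha0⟩ hy
    obtain ⟨⟨hyR, hy3, hy4⟩, hy1⟩ := hy
    by_contra hxy
    have hxa : ¬G.Adj x a := hK4' x a hxR hx2 hx3 ha2 ha3
    rw [← add_zero i] at hx0
    have hyk := key2 (i+4) 4 1 2 rfl (zshift5 i (by decide)) (zshift5 i (by decide))
      y hyR hy3 hy4
    refine hfork ⟨a, v (i+0), y, v (i+3), x,
      znodup5 (hne_out a haR _) hay.ne (hne_out a haR _)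
        (fun h => hx0 (by rw [← h]; exact ha0'))
        ((hne_out y hyR _).symm) (hvne2 0 3 (by decide)) ((hne_out x hxR _).symm)
        (hne_out y hyR _)
        (fun h => notk hyk 3 (by decide) (by decide) (by decide) (by rw [h]; exact hx3))
        ((hne_out x hxR _).symm),
      ha0', hay, ha3, hx3.symm,
      fun h => notk hyk 0 (by decide) (by decide) (by decide) h.symm,
      hvnadj' 0 3 (by decide) (by decide),
      fun h => notk hyk 3 (by decide) (by decide) (by decide) h,
      fun h => hxa h.symm,
      fun h => hx0 h.symm, fun h => hxy h.symm⟩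
  -- Claim D : a is complete to U_{i+2}^-
  have claimD : ∀ y : V, y ∈ UsetM G v (i+2) → G.Adj a y := by
    rintro y ⟨⟨hyR, hy4, hy0⟩, hy2⟩
    by_contra hay
    have hyk := key2 (i+2) 2 4 0 rfl (zshift5 i (by decide)) (zshift5 i (by decide))
      y hyR hy4 hy0
    rw [zshift5 i (by decide : (2:ZMod 5) + 2 = 4)] at hy4
    rw [zshift5 i (by decide : (2:ZMod 5) + 3 = 0)] at hy0
    refine hfork ⟨v (i+0), v (i+1), y, a, v (i+3),
      znodup5 (hvne2 0 1 (by decide)) ((hne_out y hyR _).symm) ((hne_out a haR _).symm)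
        (hvne2 0 3 (by decide)) ((hne_out y hyR _).symm) ((hne_out a haR _).symm)
        (hvne2 1 3 (by decide))
        (fun h => hy2 (by rw [h]; exact ha2))
        (hne_out y hyR _) (hne_out a haR _),
      hvadj' 0 1 (by decide), hy0.symm, ha0'.symm, ha3,
      fun h => notk hyk 1 (by decide) (by decide) (by decide) h.symm,
      fun h => notk hak 1 (by decide) (by decide) (by decide) h.symm,
      fun h => hay h.symm,
      hvnadj' 0 3 (by decide) (by decide),
      hvnadj' 1 3 (by decide) (by decide),
      notk hyk 3 (by decide) (by decide) (by decide)⟩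
  refine ⟨?_, ?_⟩
  · intro x hx y hy
    rw [show i - 1 = i + 4 from by
      rw [sub_eq_add_neg, show (-1 : ZMod 5) = 4 from by decide]] at hy
    by_cases hx0 : G.Adj x (v i)
    · rcases hy with hy | hy
      · exact claimA' x y ⟨hx, hx0⟩ hy
      · exact claimA x y ⟨hx, hx0⟩ hy
    · rcases hy with hy | hy
      · exact claimC' x y ⟨hx, hx0⟩ hy
      · exact claimC x y ⟨hx, hx0⟩ hy
  · intro x hx y hy
    have hax : G.Adj a x := claimA a x ⟨⟨haR, ha2, ha3⟩, ha0⟩ hx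
    have hay : G.Adj a y := claimD y hy
    obtain ⟨⟨hxR, hx3, hx4⟩, hx1⟩ := hx
    obtain ⟨⟨hyR, hy4, hy0⟩, hy2⟩ := hy
    by_contra hxy
    have hxk := key2 (i+1) 1 3 4 rfl (zshift5 i (by decide)) (zshift5 i (by decide))
      x hxR hx3 hx4
    have hyk := key2 (i+2) 2 4 0 rfl (zshift5 i (by decide)) (zshift5 i (by decide))
      y hyR hy4 hy0
    rw [zshift5 i (by decide : (1:ZMod 5) + 2 = 3)] at hx3
    refine hfork ⟨a, x, y, v (i+2), v (i+1),
      znodup5 hax.ne hay.ne (hne_out a haR _) (hne_out a haR _)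
        (fun h => notk hyk 3 (by decide) (by decide) (by decide) (h ▸ hx3))
        (hne_out x hxR _) (hne_out x hxR _) (hne_out y hyR _) (hne_out y hyR _)
        (hvne2 2 1 (by decide)),
      hax, hay, ha2, (hvadj' 1 2 (by decide)).symm,
      hxy,
      notk hxk 2 (by decide) (by decide) (by decide),
      hy2,
      notk hak 1 (by decide) (by decide) (by decide),
      hx1,
      notk hyk 1 (by decide) (by decide) (by decide)⟩
end
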